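/- arXiv:2407.05252 — 3 statements merged into one kernel-verified Lean document; each statement's English description precedes it below -/
import Mathlib

section
/- For every y ∈ [0,1)^{r₁} and z ∈ [0,1)^{r₂}, the system of equations B₁(x,y) + B̄₁(x) = 0, B₂(x,z) + B̄₂(x) = 0 possesses exactly one root x in [0,1]², denoted q(y,z) = (q₁(y,z), q₂(y,z)). -/
open scoped BigOperators

noncomputable def genFun (b : ℕ × ℕ → ℝ) (x : ℝ × ℝ) : ℝ :=
  ∑' j : ℕ × ℕ, b j * x.1 ^ j.1 * x.2 ^ j.2

/-- The Jacobian matrix `(B_{ij}(x))` of the generating functions, with entries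
`B_{ij}(x) = ∂B_i(x)/∂x_j` written out as termwise-differentiated series. -/
noncomputable def jacMat (b₁ b₂ : ℕ × ℕ → ℝ) (x : ℝ × ℝ) : Matrix (Fin 2) (Fin 2) ℝ :=
  !![∑' j : ℕ × ℕ, b₁ j * (j.1 : ℝ) * x.1 ^ (j.1 - 1) * x.2 ^ j.2,
     ∑' j : ℕ × ℕ, b₁ j * (j.2 : ℝ) * x.1 ^ j.1 * x.2 ^ (j.2 - 1);
     ∑' j : ℕ × ℕ, b₂ j * (j.1 : ℝ) * x.1 ^ (j.1 - 1) * x.2 ^ j.2,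
     ∑' j : ℕ × ℕ, b₂ j * (j.2 : ℝ) * x.1 ^ j.1 * x.2 ^ (j.2 - 1)]

/-- `B_k(x, y) = ∑_{j ∈ R} b_j x₁^{j₁} x₂^{j₂} y_j`. -/
noncomputable def Bpart (b : ℕ × ℕ → ℝ) (R : Finset (ℕ × ℕ)) (x : ℝ × ℝ)
    (y : {j // j ∈ R} → ℝ) : ℝ :=
  ∑ j : {j // j ∈ R}, b j.1 * x.1 ^ (j.1).1 * x.2 ^ (j.1).2 * y j

/-- `B̄_k(x) = ∑_{j ∉ R} b_j x₁^{j₁} x₂^{j₂}`. -/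
noncomputable def Bbar (b : ℕ × ℕ → ℝ) (R : Finset (ℕ × ℕ)) (x : ℝ × ℝ) : ℝ :=
  ∑' j : ℕ × ℕ, if j ∈ R then 0 else b j * x.1 ^ j.1 * x.2 ^ j.2

open Set Filter Topology

/-- Convex combination inequality for a 2-variable monomial along an increasing segment. -/
lemma monomial_combo (n m : ℕ) {x₁ x₂ p₁ p₂ l mu : ℝ}
    (hx₁ : 0 ≤ x₁) (hx₂ : 0 ≤ x₂) (h₁ : x₁ ≤ p₁) (h₂ : x₂ ≤ p₂)
    (hl : 0 ≤ l) (hm : 0 ≤ mu) (hlm : l + mu = 1) :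
    (l * x₁ + mu * p₁) ^ n * (l * x₂ + mu * p₂) ^ m
      ≤ l * (x₁ ^ n * x₂ ^ m) + mu * (p₁ ^ n * p₂ ^ m) := by
  have key : ∀ (a : ℕ) (u v : ℝ), 0 ≤ u → u ≤ v →
      ConvexOn ℝ (Icc (0:ℝ) 1) (fun t : ℝ => (AffineMap.lineMap u v t : ℝ) ^ a) := by
    intro a u v hu huv
    have h1 : ConvexOn ℝ ((AffineMap.lineMap u v : ℝ →ᵃ[ℝ] ℝ) ⁻¹' (Ici 0))
        ((fun s : ℝ => s ^ a) ∘ (AffineMap.lineMap u v : ℝ →ᵃ[ℝ] ℝ)) :=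
      (convexOn_pow a).comp_affineMap _
    refine (h1.subset ?_ (convex_Icc 0 1))
    intro t ht
    simp only [Set.mem_preimage, AffineMap.lineMap_apply, Set.mem_Ici, smul_eq_mul,
      vsub_eq_sub, vadd_eq_add]
    have := ht.1
    nlinarith [ht.1, ht.2, sub_nonneg.2 huv]
  have mono : ∀ (a : ℕ) (u v : ℝ), 0 ≤ u → u ≤ v →
      MonotoneOn (fun t : ℝ => (AffineMap.lineMap u v t : ℝ) ^ a) (Icc (0:ℝ) 1) := by
    intro a u v hu huv s hs t ht hst
    simp only [AffineMap.lineMap_apply, smul_eq_mul, vsub_eq_sub, vadd_eq_add]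
    have h0 : (0:ℝ) ≤ s * (v - u) + u := by nlinarith [hs.1, hs.2, sub_nonneg.2 huv]
    refine pow_le_pow_left₀ h0 ?_ a
    nlinarith [sub_nonneg.2 huv]
  have nn : ∀ (a : ℕ) (u v : ℝ), 0 ≤ u → u ≤ v → ∀ t ∈ Icc (0:ℝ) 1,
      0 ≤ (AffineMap.lineMap u v t : ℝ) ^ a := by
    intro a u v hu huv t ht
    have : (0:ℝ) ≤ t * (v - u) + u := by nlinarith [ht.1, ht.2, sub_nonneg.2 huv]
    simpa [AffineMap.lineMap_apply, smul_eq_mul] using pow_nonneg this a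
  have hf := key n x₁ p₁ hx₁ h₁
  have hg := key m x₂ p₂ hx₂ h₂
  have hmul : ConvexOn ℝ (Icc (0:ℝ) 1)
      ((fun t : ℝ => (AffineMap.lineMap x₁ p₁ t : ℝ) ^ n) *
       (fun t : ℝ => (AffineMap.lineMap x₂ p₂ t : ℝ) ^ m)) :=
    hf.mul hg (fun t ht => nn n x₁ p₁ hx₁ h₁ t ht) (fun t ht => nn m x₂ p₂ hx₂ h₂ t ht)
      ((mono n x₁ p₁ hx₁ h₁).monovaryOn (mono m x₂ p₂ hx₂ h₂))
  have h01 : (0:ℝ) ∈ Icc (0:ℝ) 1 := by constructor <;> norm_num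
  have h11 : (1:ℝ) ∈ Icc (0:ℝ) 1 := by constructor <;> norm_num
  have := hmul.2 h01 h11 hl hm hlm
  simp only [Pi.mul_apply, AffineMap.lineMap_apply, smul_eq_mul, vsub_eq_sub, vadd_eq_add,
    mul_zero, mul_one] at this
  have goal : ((0 + mu) * (p₁ - x₁) + x₁) ^ n * ((0 + mu) * (p₂ - x₂) + x₂) ^ m ≤
      l * ((0 * (p₁ - x₁) + x₁) ^ n * (0 * (p₂ - x₂) + x₂) ^ m) +
      mu * ((1 * (p₁ - x₁) + x₁) ^ n * (1 * (p₂ - x₂) + x₂) ^ m) := this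
  have e1 : (0 + mu) * (p₁ - x₁) + x₁ = l * x₁ + mu * p₁ := by
    rw [show l = 1 - mu by linarith]; ring
  have e2 : (0 + mu) * (p₂ - x₂) + x₂ = l * x₂ + mu * p₂ := by
    rw [show l = 1 - mu by linarith]; ring
  rw [e1, e2] at goal
  calc (l * x₁ + mu * p₁) ^ n * (l * x₂ + mu * p₂) ^ m
      ≤ l * ((0 * (p₁ - x₁) + x₁) ^ n * (0 * (p₂ - x₂) + x₂) ^ m)
        + mu * ((1 * (p₁ - x₁) + x₁) ^ n * (1 * (p₂ - x₂) + x₂) ^ m) := goal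
    _ = l * (x₁ ^ n * x₂ ^ m) + mu * (p₁ ^ n * p₂ ^ m) := by ring_nf

section series
variable {a : ℕ × ℕ → ℝ}

lemma term_nonneg (ha : ∀ j, 0 ≤ a j) {x : ℝ × ℝ} (hx1 : 0 ≤ x.1) (hx2 : 0 ≤ x.2) (j : ℕ × ℕ) :
    0 ≤ a j * x.1 ^ j.1 * x.2 ^ j.2 :=
  mul_nonneg (mul_nonneg (ha j) (pow_nonneg hx1 _)) (pow_nonneg hx2 _)

lemma term_le (ha : ∀ j, 0 ≤ a j) {x : ℝ × ℝ} (hx1 : 0 ≤ x.1) (hx2 : 0 ≤ x.2) (hx1' : x.1 ≤ 1) (hx2' : x.2 ≤ 1)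
    (j : ℕ × ℕ) : a j * x.1 ^ j.1 * x.2 ^ j.2 ≤ a j := by
  calc a j * x.1 ^ j.1 * x.2 ^ j.2 ≤ a j * 1 * 1 := by
        apply mul_le_mul (mul_le_mul le_rfl (pow_le_one₀ hx1 hx1') (pow_nonneg hx1 _) (ha j))
          (pow_le_one₀ hx2 hx2') (pow_nonneg hx2 _) (by simpa using ha j)
    _ = a j := by ring

lemma summable_term (ha : ∀ j, 0 ≤ a j) (hs : Summable a) {x : ℝ × ℝ} (hx1 : 0 ≤ x.1) (hx2 : 0 ≤ x.2) (hx1' : x.1 ≤ 1)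
    (hx2' : x.2 ≤ 1) : Summable (fun j : ℕ × ℕ => a j * x.1 ^ j.1 * x.2 ^ j.2) :=
  hs.of_nonneg_of_le (term_nonneg ha hx1 hx2) (term_le ha hx1 hx2 hx1' hx2')

lemma genFun_nonneg (ha : ∀ j, 0 ≤ a j) {x : ℝ × ℝ} (hx1 : 0 ≤ x.1) (hx2 : 0 ≤ x.2) : 0 ≤ genFun a x :=
  tsum_nonneg (term_nonneg ha hx1 hx2)

lemma genFun_le_tsum (ha : ∀ j, 0 ≤ a j) (hs : Summable a) {x : ℝ × ℝ} (hx1 : 0 ≤ x.1) (hx2 : 0 ≤ x.2) (hx1' : x.1 ≤ 1)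
    (hx2' : x.2 ≤ 1) : genFun a x ≤ ∑' j, a j :=
  Summable.tsum_le_tsum (term_le ha hx1 hx2 hx1' hx2') (summable_term ha hs hx1 hx2 hx1' hx2') hs

lemma genFun_mono (ha : ∀ j, 0 ≤ a j) (hs : Summable a) {x x' : ℝ × ℝ} (hx1 : 0 ≤ x.1) (hx2 : 0 ≤ x.2)
    (h1 : x.1 ≤ x'.1) (h2 : x.2 ≤ x'.2) (hx1' : x'.1 ≤ 1) (hx2' : x'.2 ≤ 1) :
    genFun a x ≤ genFun a x' := by
  refine Summable.tsum_le_tsum (fun j => ?_)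
    (summable_term ha hs hx1 hx2 (le_trans h1 hx1') (le_trans h2 hx2'))
    (summable_term ha hs (le_trans hx1 h1) (le_trans hx2 h2) hx1' hx2')
  have e1 : x.1 ^ j.1 ≤ x'.1 ^ j.1 := pow_le_pow_left₀ hx1 h1 _
  have e2 : x.2 ^ j.2 ≤ x'.2 ^ j.2 := pow_le_pow_left₀ hx2 h2 _
  have := ha j
  have n1 := pow_nonneg hx1 j.1
  have n2 := pow_nonneg hx2 j.2
  have n1' : (0:ℝ) ≤ x'.1 ^ j.1 := pow_nonneg (le_trans hx1 h1) j.1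
  have n2' : (0:ℝ) ≤ x'.2 ^ j.2 := pow_nonneg (le_trans hx2 h2) j.2
  calc a j * x.1 ^ j.1 * x.2 ^ j.2 ≤ a j * x'.1 ^ j.1 * x.2 ^ j.2 := by
        apply mul_le_mul_of_nonneg_right _ n2
        exact mul_le_mul_of_nonneg_left e1 (ha j)
    _ ≤ a j * x'.1 ^ j.1 * x'.2 ^ j.2 := by
        apply mul_le_mul_of_nonneg_left e2 (mul_nonneg (ha j) n1')

/-- Convexity inequality along an increasing segment. -/
lemma genFun_combo (ha : ∀ j, 0 ≤ a j) (hs : Summable a) {x p : ℝ × ℝ} (hx1 : 0 ≤ x.1) (hx2 : 0 ≤ x.2)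
    (h1 : x.1 ≤ p.1) (h2 : x.2 ≤ p.2) (hp1 : p.1 ≤ 1) (hp2 : p.2 ≤ 1)
    {l mu : ℝ} (hl : 0 ≤ l) (hm : 0 ≤ mu) (hlm : l + mu = 1) :
    genFun a (l * x.1 + mu * p.1, l * x.2 + mu * p.2)
      ≤ l * genFun a x + mu * genFun a p := by
  have hx1' : x.1 ≤ 1 := le_trans h1 hp1
  have hx2' : x.2 ≤ 1 := le_trans h2 hp2
  have hu1 : 0 ≤ l * x.1 + mu * p.1 := by nlinarith
  have hu2 : 0 ≤ l * x.2 + mu * p.2 := by nlinarith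
  have hu1' : l * x.1 + mu * p.1 ≤ 1 := by nlinarith
  have hu2' : l * x.2 + mu * p.2 ≤ 1 := by nlinarith
  have hsx := summable_term ha hs hx1 hx2 hx1' hx2'
  have hsp := summable_term ha hs (le_trans hx1 h1) (le_trans hx2 h2) hp1 hp2
  have hsrhs : Summable (fun j : ℕ × ℕ =>
      l * (a j * x.1 ^ j.1 * x.2 ^ j.2) + mu * (a j * p.1 ^ j.1 * p.2 ^ j.2)) :=
    (hsx.mul_left l).add (hsp.mul_left mu)
  have hterm : ∀ j : ℕ × ℕ,
      a j * (l * x.1 + mu * p.1) ^ j.1 * (l * x.2 + mu * p.2) ^ j.2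
        ≤ l * (a j * x.1 ^ j.1 * x.2 ^ j.2) + mu * (a j * p.1 ^ j.1 * p.2 ^ j.2) := by
    intro j
    have := monomial_combo j.1 j.2 hx1 hx2 h1 h2 hl hm hlm
    have haj := ha j
    nlinarith
  have := Summable.tsum_le_tsum hterm
      (summable_term ha hs (x := (l * x.1 + mu * p.1, l * x.2 + mu * p.2)) hu1 hu2 hu1' hu2')
      hsrhs
  calc genFun a (l * x.1 + mu * p.1, l * x.2 + mu * p.2) ≤
      ∑' j : ℕ × ℕ, (l * (a j * x.1 ^ j.1 * x.2 ^ j.2) + mu * (a j * p.1 ^ j.1 * p.2 ^ j.2)) :=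
        this
    _ = l * genFun a x + mu * genFun a p := by
        rw [Summable.tsum_add (hsx.mul_left l) (hsp.mul_left mu), tsum_mul_left, tsum_mul_left]
        rfl

/-- Dominated-convergence continuity of `genFun` along sequences in the box. -/
lemma genFun_tendsto (ha : ∀ j, 0 ≤ a j) (hs : Summable a) {xs : ℕ → ℝ × ℝ}
    (hmem : ∀ n, 0 ≤ (xs n).1 ∧ 0 ≤ (xs n).2 ∧ (xs n).1 ≤ 1 ∧ (xs n).2 ≤ 1)
    {q : ℝ × ℝ} (hq : Tendsto xs atTop (𝓝 q)) :
    Tendsto (fun n => genFun a (xs n)) atTop (𝓝 (genFun a q)) := by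
  have hq1 : Tendsto (fun n => (xs n).1) atTop (𝓝 q.1) := (continuous_fst.tendsto q).comp hq
  have hq2 : Tendsto (fun n => (xs n).2) atTop (𝓝 q.2) := (continuous_snd.tendsto q).comp hq
  simp only [genFun]
  refine tendsto_tsum_of_dominated_convergence (f := fun n (j : ℕ × ℕ) =>
    a j * (xs n).1 ^ j.1 * (xs n).2 ^ j.2) hs (fun j => ?_) ?_
  · exact ((hq1.pow j.1).const_mul (a j)).mul (hq2.pow j.2)
  · filter_upwards with n
    intro j
    rw [Real.norm_eq_abs, abs_of_nonneg (term_nonneg ha (hmem n).1 (hmem n).2.1 j)]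
    exact term_le ha (hmem n).1 (hmem n).2.1 (hmem n).2.2.1 (hmem n).2.2.2 j

end series

section maskLemmas
variable (b : ℕ × ℕ → ℝ) (R : Finset (ℕ × ℕ)) (y : {j // j ∈ R} → ℝ) (e : ℕ × ℕ)

noncomputable def combCoef : ℕ × ℕ → ℝ := fun j => if h : j ∈ R then b j * y ⟨j, h⟩ else b j

noncomputable def maskCoef : ℕ × ℕ → ℝ := fun j => if j = e then 0 else combCoef b R y j

lemma maskCoef_nonneg (hb : ∀ j, j ≠ e → 0 ≤ b j) (hy : ∀ i, 0 ≤ y i) :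
    ∀ j, 0 ≤ maskCoef b R y e j := by
  intro j
  unfold maskCoef combCoef
  by_cases hj : j = e
  · simp [hj]
  · rw [if_neg hj]
    by_cases hjR : j ∈ R
    · rw [dif_pos hjR]; exact mul_nonneg (hb j hj) (hy _)
    · rw [dif_neg hjR]; exact hb j hj

lemma maskCoef_le (hb : ∀ j, j ≠ e → 0 ≤ b j) (hy : ∀ i, y i ≤ 1) :
    ∀ j, maskCoef b R y e j ≤ (if j = e then 0 else b j) := by
  intro j
  unfold maskCoef combCoef
  by_cases hj : j = e
  · simp [hj]
  · rw [if_neg hj, if_neg hj]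
    by_cases hjR : j ∈ R
    · rw [dif_pos hjR]
      calc b j * y ⟨j, hjR⟩ ≤ b j * 1 := mul_le_mul_of_nonneg_left (hy _) (hb j hj)
        _ = b j := mul_one _
    · rw [dif_neg hjR]

lemma maskCoef_summable (hb : ∀ j, j ≠ e → 0 ≤ b j) (hy0 : ∀ i, 0 ≤ y i) (hy1 : ∀ i, y i ≤ 1)
    (hsb : Summable (fun j => if j = e then 0 else b j)) :
    Summable (maskCoef b R y e) :=
  hsb.of_nonneg_of_le (maskCoef_nonneg b R y e hb hy0) (maskCoef_le b R y e hb hy1)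

end maskLemmas

lemma tsum_split (f : ℕ × ℕ → ℝ) (R : Finset (ℕ × ℕ)) (hf : Summable f) :
    ∑' j, f j = (∑ j ∈ R, f j) + ∑' j, if j ∈ R then 0 else f j := by
  have h1 : Summable (fun j => if j ∈ R then f j else 0) :=
    summable_of_ne_finset_zero (s := R) (fun j hj => by simp [hj])
  have h2 : Summable (fun j => if j ∈ R then 0 else f j) := by
    apply (hf.sub h1).congr
    intro j; by_cases hj : j ∈ R <;> simp [hj]
  have hsplit : ∀ j, f j = (if j ∈ R then f j else 0) + (if j ∈ R then 0 else f j) := by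
    intro j; by_cases hj : j ∈ R <;> simp [hj]
  calc ∑' j, f j = ∑' j, ((if j ∈ R then f j else 0) + (if j ∈ R then 0 else f j)) :=
        tsum_congr hsplit
    _ = (∑' j, if j ∈ R then f j else 0) + ∑' j, if j ∈ R then 0 else f j := Summable.tsum_add h1 h2
    _ = (∑ j ∈ R, f j) + ∑' j, if j ∈ R then 0 else f j := by
        congr 1
        rw [tsum_eq_sum (s := R) (fun j hj => by simp [hj])]
        exact Finset.sum_congr rfl (fun j hj => by simp [hj])

lemma key_eq (b : ℕ × ℕ → ℝ) (R : Finset (ℕ × ℕ)) (y : {j // j ∈ R} → ℝ) (e : ℕ × ℕ)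
    (heR : e ∉ R) (x : ℝ × ℝ)
    (hsum : Summable (fun j => combCoef b R y j * x.1 ^ j.1 * x.2 ^ j.2)) :
    Bpart b R x y + Bbar b R x
      = b e * x.1 ^ e.1 * x.2 ^ e.2 + genFun (maskCoef b R y e) x := by
  set c := combCoef b R y with hc
  have hBpart : Bpart b R x y = ∑ j ∈ R, c j * x.1 ^ j.1 * x.2 ^ j.2 := by
    rw [Bpart]
    rw [← Finset.sum_attach R (fun j => c j * x.1 ^ j.1 * x.2 ^ j.2)]
    rw [Finset.univ_eq_attach]
    refine Finset.sum_congr rfl (fun j _ => ?_)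
    simp only [hc, combCoef, dif_pos j.2]
    ring
  have hBbar : Bbar b R x = ∑' j, if j ∈ R then 0 else c j * x.1 ^ j.1 * x.2 ^ j.2 := by
    rw [Bbar]
    refine tsum_congr (fun j => ?_)
    by_cases hj : j ∈ R <;> simp [hj, hc, combCoef]
  have h1 : Bpart b R x y + Bbar b R x = genFun c x := by
    rw [hBpart, hBbar, genFun, tsum_split _ R hsum]
  rw [h1, genFun, Summable.tsum_eq_add_tsum_ite hsum e]
  have he : c e = b e := by simp [hc, combCoef, heR]
  rw [he]
  congr 1
  refine tsum_congr (fun j => ?_)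
  by_cases hj : j = e <;> simp [hj, maskCoef, hc]
set_option maxHeartbeats 1600000 in
theorem perturbed_unique_root (b₁ b₂ : ℕ × ℕ → ℝ)
    (hb₁ : ∀ j : ℕ × ℕ, j ≠ (1, 0) → 0 ≤ b₁ j)
    (hb₂ : ∀ j : ℕ × ℕ, j ≠ (0, 1) → 0 ≤ b₂ j)
    (hs₁ : Summable fun j : ℕ × ℕ => if j = (1, 0) then 0 else b₁ j)
    (hs₂ : Summable fun j : ℕ × ℕ => if j = (0, 1) then 0 else b₂ j)
    (he₁ : b₁ (1, 0) = -∑' j : ℕ × ℕ, if j = (1, 0) then 0 else b₁ j)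
    (he₂ : b₂ (0, 1) = -∑' j : ℕ × ℕ, if j = (0, 1) then 0 else b₂ j)
    (hA2 : (Summable fun j : ℕ × ℕ => b₁ j * (j.1 : ℝ)) ∧
      (Summable fun j : ℕ × ℕ => b₁ j * (j.2 : ℝ)) ∧
      (Summable fun j : ℕ × ℕ => b₂ j * (j.1 : ℝ)) ∧
      (Summable fun j : ℕ × ℕ => b₂ j * (j.2 : ℝ)))
    (hA1 : ¬ ∃ M : Matrix (Fin 2) (Fin 2) ℝ, ∀ x ∈ Set.Icc ((0 : ℝ), (0 : ℝ)) (1, 1),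
      genFun b₁ x = x.1 * M 0 0 + x.2 * M 1 0 ∧ genFun b₂ x = x.1 * M 0 1 + x.2 * M 1 1)
    (hA3 : ∃ m : ℕ, ∀ i j : Fin 2, 0 < ((jacMat b₁ b₂ (1, 1)) ^ m) i j)
    (R₁ R₂ : Finset (ℕ × ℕ)) (hR₁ : R₁.Nonempty) (hR₂ : R₂.Nonempty)
    (hpos₁ : ∀ j ∈ R₁, 0 < b₁ j) (hpos₂ : ∀ j ∈ R₂, 0 < b₂ j)
    (y : {j // j ∈ R₁} → ℝ) (z : {j // j ∈ R₂} → ℝ)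
    (hy : ∀ i, y i ∈ Set.Ico (0 : ℝ) 1) (hz : ∀ i, z i ∈ Set.Ico (0 : ℝ) 1)
    :
    ∃! x : ℝ × ℝ, x ∈ Set.Icc ((0 : ℝ), (0 : ℝ)) (1, 1) ∧
      Bpart b₁ R₁ x y + Bbar b₁ R₁ x = 0 ∧ Bpart b₂ R₂ x z + Bbar b₂ R₂ x = 0 := by
  clear hA1 hA2 hA3
  have hbox : ∀ u : ℝ × ℝ, u ∈ Set.Icc ((0:ℝ),(0:ℝ)) (1,1) ↔
      (0 ≤ u.1 ∧ 0 ≤ u.2 ∧ u.1 ≤ 1 ∧ u.2 ≤ 1) := by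
    intro u
    rw [Set.mem_Icc, Prod.le_def, Prod.le_def]
    tauto
  obtain ⟨j₁, hj₁⟩ := hR₁
  obtain ⟨j₂, hj₂⟩ := hR₂
  set S₁ : ℝ := ∑' j : ℕ × ℕ, if j = (1,0) then 0 else b₁ j with hS₁def
  set S₂ : ℝ := ∑' j : ℕ × ℕ, if j = (0,1) then 0 else b₂ j with hS₂def
  have hnn₁ : ∀ j : ℕ × ℕ, 0 ≤ if j = (1,0) then 0 else b₁ j := by
    intro j; by_cases h : j = (1,0)
    · simp [h]
    · rw [if_neg h]; exact hb₁ j h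
  have hnn₂ : ∀ j : ℕ × ℕ, 0 ≤ if j = (0,1) then 0 else b₂ j := by
    intro j; by_cases h : j = (0,1)
    · simp [h]
    · rw [if_neg h]; exact hb₂ j h
  have hS₁0 : 0 ≤ S₁ := tsum_nonneg hnn₁
  have hS₂0 : 0 ≤ S₂ := tsum_nonneg hnn₂
  have hnR₁ : (1,0) ∉ R₁ := by
    intro hmem
    have h1 := hpos₁ _ hmem
    rw [he₁] at h1
    linarith only [hS₁0, h1]
  have hnR₂ : (0,1) ∉ R₂ := by
    intro hmem
    have h1 := hpos₂ _ hmem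
    rw [he₂] at h1
    linarith only [hS₂0, h1]
  have hj₁e : j₁ ≠ (1,0) := fun h => hnR₁ (h ▸ hj₁)
  have hj₂e : j₂ ≠ (0,1) := fun h => hnR₂ (h ▸ hj₂)
  have hS₁pos : 0 < S₁ := by
    have h := Summable.le_tsum hs₁ j₁ (fun j' _ => hnn₁ j')
    rw [if_neg hj₁e] at h
    exact lt_of_lt_of_le (hpos₁ _ hj₁) h
  have hS₂pos : 0 < S₂ := by
    have h := Summable.le_tsum hs₂ j₂ (fun j' _ => hnn₂ j')
    rw [if_neg hj₂e] at h
    exact lt_of_lt_of_le (hpos₂ _ hj₂) h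
  have hy0 : ∀ i, 0 ≤ y i := fun i => (hy i).1
  have hy1 : ∀ i, y i ≤ 1 := fun i => le_of_lt (hy i).2
  have hz0 : ∀ i, 0 ≤ z i := fun i => (hz i).1
  have hz1 : ∀ i, z i ≤ 1 := fun i => le_of_lt (hz i).2
  set a₁ : ℕ × ℕ → ℝ := maskCoef b₁ R₁ y (1,0) with ha₁def
  set a₂ : ℕ × ℕ → ℝ := maskCoef b₂ R₂ z (0,1) with ha₂def
  have ha₁ : ∀ j, 0 ≤ a₁ j := maskCoef_nonneg b₁ R₁ y (1,0) hb₁ hy0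
  have ha₂ : ∀ j, 0 ≤ a₂ j := maskCoef_nonneg b₂ R₂ z (0,1) hb₂ hz0
  have hsa₁ : Summable a₁ := maskCoef_summable b₁ R₁ y (1,0) hb₁ hy0 hy1 hs₁
  have hsa₂ : Summable a₂ := maskCoef_summable b₂ R₂ z (0,1) hb₂ hz0 hz1 hs₂
  set T₁ : ℝ := ∑' j, a₁ j with hT₁def
  set T₂ : ℝ := ∑' j, a₂ j with hT₂def
  have hT₁0 : 0 ≤ T₁ := tsum_nonneg ha₁
  have hT₂0 : 0 ≤ T₂ := tsum_nonneg ha₂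
  have hT₁S : T₁ < S₁ := by
    refine Summable.tsum_lt_tsum (i := j₁) (maskCoef_le b₁ R₁ y (1,0) hb₁ hy1) ?_ hsa₁ hs₁
    rw [if_neg hj₁e, ha₁def]
    unfold maskCoef combCoef
    rw [if_neg hj₁e, dif_pos hj₁]
    exact mul_lt_of_lt_one_right (hpos₁ _ hj₁) (hy ⟨j₁, hj₁⟩).2
  have hT₂S : T₂ < S₂ := by
    refine Summable.tsum_lt_tsum (i := j₂) (maskCoef_le b₂ R₂ z (0,1) hb₂ hz1) ?_ hsa₂ hs₂
    rw [if_neg hj₂e, ha₂def]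
    unfold maskCoef combCoef
    rw [if_neg hj₂e, dif_pos hj₂]
    exact mul_lt_of_lt_one_right (hpos₂ _ hj₂) (hz ⟨j₂, hj₂⟩).2
  set θ : ℝ := max (T₁ / S₁) (T₂ / S₂) with hθdef
  have hθ0 : 0 ≤ θ := le_trans (div_nonneg hT₁0 hS₁0) (le_max_left _ _)
  have hθ1 : θ < 1 := max_lt ((div_lt_one hS₁pos).2 hT₁S) ((div_lt_one hS₂pos).2 hT₂S)
  set G : ℝ × ℝ → ℝ × ℝ := fun u => (genFun a₁ u / S₁, genFun a₂ u / S₂) with hGdef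
  have hG1 : ∀ u : ℝ × ℝ, (G u).1 = genFun a₁ u / S₁ := fun u => rfl
  have hG2 : ∀ u : ℝ × ℝ, (G u).2 = genFun a₂ u / S₂ := fun u => rfl
  have hGbound : ∀ u : ℝ × ℝ, 0 ≤ u.1 → 0 ≤ u.2 → u.1 ≤ 1 → u.2 ≤ 1 →
      0 ≤ (G u).1 ∧ 0 ≤ (G u).2 ∧ (G u).1 ≤ θ ∧ (G u).2 ≤ θ := by
    intro u h1 h2 h3 h4
    refine ⟨div_nonneg (genFun_nonneg ha₁ h1 h2) hS₁0,
      div_nonneg (genFun_nonneg ha₂ h1 h2) hS₂0, ?_, ?_⟩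
    · refine le_trans ?_ (le_max_left (T₁ / S₁) (T₂ / S₂))
      rw [hG1]
      exact div_le_div_of_nonneg_right (genFun_le_tsum ha₁ hsa₁ h1 h2 h3 h4) hS₁0
    · refine le_trans ?_ (le_max_right (T₁ / S₁) (T₂ / S₂))
      rw [hG2]
      exact div_le_div_of_nonneg_right (genFun_le_tsum ha₂ hsa₂ h1 h2 h3 h4) hS₂0
  have hGmono : ∀ u v : ℝ × ℝ, 0 ≤ u.1 → 0 ≤ u.2 → u.1 ≤ v.1 → u.2 ≤ v.2 →
      v.1 ≤ 1 → v.2 ≤ 1 → (G u).1 ≤ (G v).1 ∧ (G u).2 ≤ (G v).2 := by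
    intro u v h1 h2 h3 h4 h5 h6
    constructor
    · rw [hG1, hG1]
      exact div_le_div_of_nonneg_right (genFun_mono ha₁ hsa₁ h1 h2 h3 h4 h5 h6) hS₁0
    · rw [hG2, hG2]
      exact div_le_div_of_nonneg_right (genFun_mono ha₂ hsa₂ h1 h2 h3 h4 h5 h6) hS₂0
  -- summability of the combined coefficients at points of the box
  have hcomb₁ : ∀ u : ℝ × ℝ, 0 ≤ u.1 → 0 ≤ u.2 → u.1 ≤ 1 → u.2 ≤ 1 →
      Summable (fun j : ℕ × ℕ => combCoef b₁ R₁ y j * u.1 ^ j.1 * u.2 ^ j.2) := by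
    intro u h1 h2 h3 h4
    have hm := summable_term ha₁ hsa₁ h1 h2 h3 h4
    have hsp : Summable (fun j : ℕ × ℕ =>
        if j = (1,0) then b₁ (1,0) * u.1 ^ (1:ℕ) * u.2 ^ (0:ℕ) else 0) := by
      refine summable_of_ne_finset_zero (s := {((1:ℕ),(0:ℕ))}) (fun j hj => ?_)
      rw [if_neg (by simpa using hj)]
    apply (hm.add hsp).congr
    intro j
    by_cases hj : j = (1,0)
    · subst hj
      rw [if_pos rfl, ha₁def]
      unfold maskCoef combCoef
      rw [if_pos rfl, dif_neg hnR₁]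
      ring
    · rw [if_neg hj, ha₁def]
      unfold maskCoef combCoef
      rw [if_neg hj]
      ring
  have hcomb₂ : ∀ u : ℝ × ℝ, 0 ≤ u.1 → 0 ≤ u.2 → u.1 ≤ 1 → u.2 ≤ 1 →
      Summable (fun j : ℕ × ℕ => combCoef b₂ R₂ z j * u.1 ^ j.1 * u.2 ^ j.2) := by
    intro u h1 h2 h3 h4
    have hm := summable_term ha₂ hsa₂ h1 h2 h3 h4
    have hsp : Summable (fun j : ℕ × ℕ =>
        if j = (0,1) then b₂ (0,1) * u.1 ^ (0:ℕ) * u.2 ^ (1:ℕ) else 0) := by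
      refine summable_of_ne_finset_zero (s := {((0:ℕ),(1:ℕ))}) (fun j hj => ?_)
      rw [if_neg (by simpa using hj)]
    apply (hm.add hsp).congr
    intro j
    by_cases hj : j = (0,1)
    · subst hj
      rw [if_pos rfl, ha₂def]
      unfold maskCoef combCoef
      rw [if_pos rfl, dif_neg hnR₂]
      ring
    · rw [if_neg hj, ha₂def]
      unfold maskCoef combCoef
      rw [if_neg hj]
      ring
  -- the equations rewritten through `genFun`
  have heqn₁ : ∀ u : ℝ × ℝ, 0 ≤ u.1 → 0 ≤ u.2 → u.1 ≤ 1 → u.2 ≤ 1 →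
      (Bpart b₁ R₁ u y + Bbar b₁ R₁ u = 0 ↔ genFun a₁ u = S₁ * u.1) := by
    intro u h1 h2 h3 h4
    rw [key_eq b₁ R₁ y (1,0) hnR₁ u (hcomb₁ u h1 h2 h3 h4), he₁, ← ha₁def]
    simp only [pow_one, pow_zero, mul_one]
    constructor <;> intro h <;> linarith only [h]
  have heqn₂ : ∀ u : ℝ × ℝ, 0 ≤ u.1 → 0 ≤ u.2 → u.1 ≤ 1 → u.2 ≤ 1 →
      (Bpart b₂ R₂ u z + Bbar b₂ R₂ u = 0 ↔ genFun a₂ u = S₂ * u.2) := by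
    intro u h1 h2 h3 h4
    rw [key_eq b₂ R₂ z (0,1) hnR₂ u (hcomb₂ u h1 h2 h3 h4), he₂, ← ha₂def]
    simp only [pow_one, pow_zero, mul_one, one_mul]
    constructor <;> intro h <;> linarith only [h]
  -- the iteration
  set seq : ℕ → ℝ × ℝ := fun n => G^[n] (1,1) with hseqdef
  have hseq0 : seq 0 = (1,1) := rfl
  have hseqS : ∀ n, seq (n+1) = G (seq n) := fun n => Function.iterate_succ_apply' G n (1,1)
  have hseqP : ∀ n, 0 ≤ (seq n).1 ∧ 0 ≤ (seq n).2 ∧ (seq n).1 ≤ 1 ∧ (seq n).2 ≤ 1 := by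
    intro n
    induction n with
    | zero => rw [hseq0]; norm_num
    | succ n ih =>
      rw [hseqS]
      obtain ⟨c1, c2, c3, c4⟩ := hGbound (seq n) ih.1 ih.2.1 ih.2.2.1 ih.2.2.2
      exact ⟨c1, c2, le_trans c3 (le_of_lt hθ1), le_trans c4 (le_of_lt hθ1)⟩
  have hanti : ∀ n, (seq (n+1)).1 ≤ (seq n).1 ∧ (seq (n+1)).2 ≤ (seq n).2 := by
    intro n
    induction n with
    | zero =>
      have h := hseqP 1
      rw [hseq0]
      exact ⟨h.2.2.1, h.2.2.2⟩
    | succ n ih =>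
      have h := hGmono (seq (n+1)) (seq n) (hseqP (n+1)).1 (hseqP (n+1)).2.1 ih.1 ih.2
        (hseqP n).2.2.1 (hseqP n).2.2.2
      rw [← hseqS (n+1), ← hseqS n] at h
      exact h
  have hmono1 : Antitone (fun n => (seq n).1) := antitone_nat_of_succ_le (fun n => (hanti n).1)
  have hmono2 : Antitone (fun n => (seq n).2) := antitone_nat_of_succ_le (fun n => (hanti n).2)
  have hbdd1 : BddBelow (Set.range (fun n => (seq n).1)) := by
    refine ⟨0, ?_⟩
    rintro v ⟨n, rfl⟩
    exact (hseqP n).1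
  have hbdd2 : BddBelow (Set.range (fun n => (seq n).2)) := by
    refine ⟨0, ?_⟩
    rintro v ⟨n, rfl⟩
    exact (hseqP n).2.1
  have hq1 : Tendsto (fun n => (seq n).1) atTop (𝓝 (⨅ n, (seq n).1)) :=
    tendsto_atTop_ciInf hmono1 hbdd1
  have hq2 : Tendsto (fun n => (seq n).2) atTop (𝓝 (⨅ n, (seq n).2)) :=
    tendsto_atTop_ciInf hmono2 hbdd2
  set q : ℝ × ℝ := (⨅ n, (seq n).1, ⨅ n, (seq n).2) with hqdef
  have hqten : Tendsto seq atTop (𝓝 q) := by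
    have h := hq1.prodMk_nhds hq2
    exact h
  have hqP : 0 ≤ q.1 ∧ 0 ≤ q.2 ∧ q.1 ≤ 1 ∧ q.2 ≤ 1 := by
    refine ⟨ge_of_tendsto hq1 (Eventually.of_forall fun n => (hseqP n).1),
      ge_of_tendsto hq2 (Eventually.of_forall fun n => (hseqP n).2.1),
      le_of_tendsto hq1 (Eventually.of_forall fun n => (hseqP n).2.2.1),
      le_of_tendsto hq2 (Eventually.of_forall fun n => (hseqP n).2.2.2)⟩
  have hfix1 : (G q).1 = q.1 := by
    have h1 := (genFun_tendsto ha₁ hsa₁ hseqP hqten).div_const S₁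
    have h2 : Tendsto (fun n => (seq (n+1)).1) atTop (𝓝 q.1) :=
      hq1.comp (tendsto_add_atTop_nat 1)
    have h3 : (fun n => (seq (n+1)).1) = (fun n => genFun a₁ (seq n) / S₁) := by
      funext n
      rw [hseqS n, hG1]
    rw [h3] at h2
    exact (tendsto_nhds_unique h1 h2)
  have hfix2 : (G q).2 = q.2 := by
    have h1 := (genFun_tendsto ha₂ hsa₂ hseqP hqten).div_const S₂
    have h2 : Tendsto (fun n => (seq (n+1)).2) atTop (𝓝 q.2) :=
      hq2.comp (tendsto_add_atTop_nat 1)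
    have h3 : (fun n => (seq (n+1)).2) = (fun n => genFun a₂ (seq n) / S₂) := by
      funext n
      rw [hseqS n, hG2]
    rw [h3] at h2
    exact (tendsto_nhds_unique h1 h2)
  have hgen1q : genFun a₁ q = S₁ * q.1 := by
    have h := hfix1
    rw [hG1] at h
    have h2 := (div_eq_iff (ne_of_gt hS₁pos)).1 h
    rw [h2, mul_comm]
  have hgen2q : genFun a₂ q = S₂ * q.2 := by
    have h := hfix2
    rw [hG2] at h
    have h2 := (div_eq_iff (ne_of_gt hS₂pos)).1 h
    rw [h2, mul_comm]
  -- q is a solution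
  have hqsol₁ : Bpart b₁ R₁ q y + Bbar b₁ R₁ q = 0 :=
    (heqn₁ q hqP.1 hqP.2.1 hqP.2.2.1 hqP.2.2.2).2 hgen1q
  have hqsol₂ : Bpart b₂ R₂ q z + Bbar b₂ R₂ q = 0 :=
    (heqn₂ q hqP.1 hqP.2.1 hqP.2.2.1 hqP.2.2.2).2 hgen2q
  -- bounds on q
  have hqθ1 : q.1 ≤ θ := by
    rw [← hfix1]
    exact (hGbound q hqP.1 hqP.2.1 hqP.2.2.1 hqP.2.2.2).2.2.1
  have hqθ2 : q.2 ≤ θ := by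
    rw [← hfix2]
    exact (hGbound q hqP.1 hqP.2.1 hqP.2.2.1 hqP.2.2.2).2.2.2
  refine ⟨q, ⟨(hbox q).2 ⟨hqP.1, hqP.2.1, hqP.2.2.1, hqP.2.2.2⟩, hqsol₁, hqsol₂⟩, ?_⟩
  rintro x ⟨hxbox, hxe₁, hxe₂⟩
  obtain ⟨hx01, hx02, hx11, hx12⟩ := (hbox x).1 hxbox
  have hgx1 : genFun a₁ x = S₁ * x.1 := (heqn₁ x hx01 hx02 hx11 hx12).1 hxe₁
  have hgx2 : genFun a₂ x = S₂ * x.2 := (heqn₂ x hx01 hx02 hx11 hx12).1 hxe₂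
  have hGx1 : (G x).1 = x.1 := by
    rw [hG1, hgx1, mul_comm, mul_div_assoc, div_self (ne_of_gt hS₁pos), mul_one]
  have hGx2 : (G x).2 = x.2 := by
    rw [hG2, hgx2, mul_comm, mul_div_assoc, div_self (ne_of_gt hS₂pos), mul_one]
  -- x is below every iterate
  have hxle : ∀ n, x.1 ≤ (seq n).1 ∧ x.2 ≤ (seq n).2 := by
    intro n
    induction n with
    | zero => rw [hseq0]; exact ⟨hx11, hx12⟩
    | succ n ih =>
      rw [hseqS]
      have := hGmono x (seq n) hx01 hx02 ih.1 ih.2 (hseqP n).2.2.1 (hseqP n).2.2.2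
      exact ⟨hGx1 ▸ this.1, hGx2 ▸ this.2⟩
  have hxq1 : x.1 ≤ q.1 := ge_of_tendsto hq1 (Eventually.of_forall fun n => (hxle n).1)
  have hxq2 : x.2 ≤ q.2 := ge_of_tendsto hq2 (Eventually.of_forall fun n => (hxle n).2)
  -- the overshoot point p
  set δ : ℝ := 1 - θ with hδdef
  have hδpos : 0 < δ := by rw [hδdef]; linarith only [hθ1]
  set p : ℝ × ℝ := (q.1 + δ * (q.1 - x.1), q.2 + δ * (q.2 - x.2)) with hpdef
  have hp1e : p.1 = q.1 + δ * (q.1 - x.1) := rfl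
  have hp2e : p.2 = q.2 + δ * (q.2 - x.2) := rfl
  have hd1 : 0 ≤ δ * (q.1 - x.1) := mul_nonneg hδpos.le (by linarith only [hxq1])
  have hd2 : 0 ≤ δ * (q.2 - x.2) := mul_nonneg hδpos.le (by linarith only [hxq2])
  have hp01 : 0 ≤ p.1 := by linarith only [hp1e, hd1, hqP.1]
  have hp02 : 0 ≤ p.2 := by linarith only [hp2e, hd2, hqP.2.1]
  have hub1 : δ * (q.1 - x.1) ≤ δ * θ :=
    mul_le_mul_of_nonneg_left (by linarith only [hqθ1, hx01]) hδpos.le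
  have hub2 : δ * (q.2 - x.2) ≤ δ * θ :=
    mul_le_mul_of_nonneg_left (by linarith only [hqθ2, hx02]) hδpos.le
  have hubθ : δ * θ ≤ δ * 1 := mul_le_mul_of_nonneg_left hθ1.le hδpos.le
  have hp11 : p.1 ≤ 1 := by
    have hδe : δ = 1 - θ := hδdef
    linarith only [hp1e, hub1, hubθ, hqθ1, hδe]
  have hp12 : p.2 ≤ 1 := by
    have hδe : δ = 1 - θ := hδdef
    linarith only [hp2e, hub2, hubθ, hqθ2, hδe]
  have hxp1 : x.1 ≤ p.1 := by linarith only [hp1e, hd1, hxq1]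
  have hxp2 : x.2 ≤ p.2 := by linarith only [hp2e, hd2, hxq2]
  have h1δ : (0:ℝ) < 1 + δ := by linarith only [hδpos]
  have hne1δ : (1:ℝ) + δ ≠ 0 := ne_of_gt h1δ
  set l : ℝ := δ / (1 + δ) with hldef
  set mu : ℝ := 1 / (1 + δ) with hmudef
  have hl0 : 0 ≤ l := div_nonneg (le_of_lt hδpos) (le_of_lt h1δ)
  have hmu0 : 0 ≤ mu := div_nonneg zero_le_one (le_of_lt h1δ)
  have hmupos : 0 < mu := div_pos one_pos h1δ
  have hlmu : l + mu = 1 := by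
    rw [hldef, hmudef, ← add_div, add_comm δ 1, div_self hne1δ]
  have hcombo1 : l * x.1 + mu * p.1 = q.1 := by
    rw [hldef, hmudef, hp1e]
    field_simp
    ring
  have hcombo2 : l * x.2 + mu * p.2 = q.2 := by
    rw [hldef, hmudef, hp2e]
    field_simp
    ring
  have hkey₁ : genFun a₁ q ≤ l * genFun a₁ x + mu * genFun a₁ p := by
    have := genFun_combo ha₁ hsa₁ hx01 hx02 hxp1 hxp2 hp11 hp12 hl0 hmu0 hlmu
    rw [hcombo1, hcombo2, Prod.mk.eta] at this
    exact this
  have hkey₂ : genFun a₂ q ≤ l * genFun a₂ x + mu * genFun a₂ p := by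
    have := genFun_combo ha₂ hsa₂ hx01 hx02 hxp1 hxp2 hp11 hp12 hl0 hmu0 hlmu
    rw [hcombo1, hcombo2, Prod.mk.eta] at this
    exact this
  -- deduce S₁ * p.1 ≤ genFun a₁ p
  have hl' : (1 + δ) * l = δ := by
    rw [hldef, mul_div_assoc', mul_comm, mul_div_assoc, div_self hne1δ, mul_one]
  have hmu' : (1 + δ) * mu = 1 := by
    rw [hmudef, mul_one_div, div_self hne1δ]
  have hgp1 : S₁ * p.1 ≤ genFun a₁ p := by
    rw [hgen1q, hgx1] at hkey₁
    have h' := mul_le_mul_of_nonneg_left hkey₁ (le_of_lt h1δ)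
    have hexp : (1 + δ) * (l * (S₁ * x.1) + mu * genFun a₁ p)
        = δ * (S₁ * x.1) + genFun a₁ p := by
      linear_combination (S₁ * x.1) * hl' + (genFun a₁ p) * hmu'
    rw [hexp] at h'
    have hgoal : S₁ * p.1 = S₁ * (q.1 + δ * (q.1 - x.1)) := by rw [hp1e]
    rw [hgoal]
    nlinarith only [h']
  have hgp2 : S₂ * p.2 ≤ genFun a₂ p := by
    rw [hgen2q, hgx2] at hkey₂
    have h' := mul_le_mul_of_nonneg_left hkey₂ (le_of_lt h1δ)
    have hexp : (1 + δ) * (l * (S₂ * x.2) + mu * genFun a₂ p)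
        = δ * (S₂ * x.2) + genFun a₂ p := by
      linear_combination (S₂ * x.2) * hl' + (genFun a₂ p) * hmu'
    rw [hexp] at h'
    have hgoal : S₂ * p.2 = S₂ * (q.2 + δ * (q.2 - x.2)) := by rw [hp2e]
    rw [hgoal]
    nlinarith only [h']
  have hpG1 : p.1 ≤ (G p).1 := by
    rw [hG1, le_div_iff₀ hS₁pos]
    linarith only [hgp1]
  have hpG2 : p.2 ≤ (G p).2 := by
    rw [hG2, le_div_iff₀ hS₂pos]
    linarith only [hgp2]
  -- p is below every iterate
  have hple : ∀ n, p.1 ≤ (seq n).1 ∧ p.2 ≤ (seq n).2 := by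
    intro n
    induction n with
    | zero => rw [hseq0]; exact ⟨hp11, hp12⟩
    | succ n ih =>
      rw [hseqS]
      have := hGmono p (seq n) hp01 hp02 ih.1 ih.2 (hseqP n).2.2.1 (hseqP n).2.2.2
      exact ⟨le_trans hpG1 this.1, le_trans hpG2 this.2⟩
  have hpq1 : p.1 ≤ q.1 := ge_of_tendsto hq1 (Eventually.of_forall fun n => (hple n).1)
  have hpq2 : p.2 ≤ q.2 := ge_of_tendsto hq2 (Eventually.of_forall fun n => (hple n).2)
  -- conclude x = q
  have hq1x : q.1 = x.1 := by
    refine le_antisymm ?_ hxq1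
    by_contra hcon
    push_neg at hcon
    have hpos := mul_pos hδpos (sub_pos.2 hcon)
    linarith only [hpq1, hp1e, hpos]
  have hq2x : q.2 = x.2 := by
    refine le_antisymm ?_ hxq2
    by_contra hcon
    push_neg at hcon
    have hpos := mul_pos hδpos (sub_pos.2 hcon)
    linarith only [hpq2, hp2e, hpos]
  exact Prod.ext hq1x.symm hq2x.symm
end

section
/- For every x ∈ [0,1]², y ∈ [0,1)^{r₁} and z ∈ [0,1)^{r₂}, the unique solution G(t,x,y,z) of the initial value problem ∂u₁/∂t = B₁(u,y) + B̄₁(u), ∂u₂/∂t = B₂(u,z) + B̄₂(u), u(0) = x, converges as t → ∞ to q(y,z), the unique root in [0,1]² of the system B₁(x,y) + B̄₁(x) = 0, B₂(x,z) + B̄₂(x) = 0. -/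
open scoped BigOperators

open Set Filter

open scoped BigOperators

set_option linter.unusedSectionVars false


local notation "K" => Set.Icc ((0:ℝ),(0:ℝ)) ((1:ℝ),(1:ℝ))




lemma mem_K_iff (u : ℝ × ℝ) : u ∈ K ↔ (0 ≤ u.1 ∧ u.1 ≤ 1) ∧ (0 ≤ u.2 ∧ u.2 ≤ 1) := by
  simp [Set.mem_Icc, Prod.le_def]; tauto

lemma summable_ite_point {f : ℕ × ℕ → ℝ} (hf : Summable f) (a : ℕ × ℕ) (c : ℝ) :
    Summable (fun j => if j = a then c else f j) := by
  have : (fun j => if j = a then c else f j)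
      = fun j => f j + (if j = a then c - f a else 0) := by
    funext j; by_cases h : j = a <;> simp [h]
  rw [this]
  exact hf.add (summable_of_ne_finset_zero (s := {a}) (by intro b hb; simp at hb; simp [hb]))

lemma abs_pow_sub_pow_le' {a b : ℝ} (ha : a ∈ Icc (0:ℝ) 1) (hb : b ∈ Icc (0:ℝ) 1) (n : ℕ) :
    |a ^ n - b ^ n| ≤ n * |a - b| := by
  induction n with
  | zero => simp
  | succ n ih =>
    have h1 : a ^ (n+1) - b ^ (n+1) = a * (a ^ n - b ^ n) + (a - b) * b ^ n := by ring
    have hbn : |b ^ n| ≤ 1 := by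
      rw [abs_of_nonneg (pow_nonneg hb.1 n)]; exact pow_le_one₀ hb.1 hb.2
    have han : |a| ≤ 1 := abs_le.mpr ⟨by linarith [ha.1], ha.2⟩
    calc |a ^ (n+1) - b ^ (n+1)| ≤ |a * (a ^ n - b ^ n)| + |(a - b) * b ^ n| := by
          rw [h1]; exact abs_add_le _ _
      _ ≤ |a ^ n - b ^ n| + |a - b| := by
          rw [abs_mul, abs_mul]
          have := abs_nonneg (a ^ n - b ^ n); have := abs_nonneg (a - b)
          nlinarith
      _ ≤ n * |a - b| + |a - b| := by linarith
      _ = (n + 1 : ℕ) * |a - b| := by push_cast; ring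

lemma abs_monomial_sub_le {u v : ℝ × ℝ} (hu : u ∈ K) (hv : v ∈ K) (m n : ℕ) :
    |u.1 ^ m * u.2 ^ n - v.1 ^ m * v.2 ^ n| ≤ m * |u.1 - v.1| + n * |u.2 - v.2| := by
  rw [mem_K_iff] at hu hv
  have h1 : u.1 ^ m * u.2 ^ n - v.1 ^ m * v.2 ^ n
      = (u.1 ^ m - v.1 ^ m) * u.2 ^ n + v.1 ^ m * (u.2 ^ n - v.2 ^ n) := by ring
  have h2 : |u.2 ^ n| ≤ 1 := by
    rw [abs_of_nonneg (pow_nonneg hu.2.1 n)]; exact pow_le_one₀ hu.2.1 hu.2.2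
  have h3 : |v.1 ^ m| ≤ 1 := by
    rw [abs_of_nonneg (pow_nonneg hv.1.1 m)]; exact pow_le_one₀ hv.1.1 hv.1.2
  have h4 := abs_pow_sub_pow_le' (a := u.1) (b := v.1) ⟨hu.1.1, hu.1.2⟩ ⟨hv.1.1, hv.1.2⟩ m
  have h5 := abs_pow_sub_pow_le' (a := u.2) (b := v.2) ⟨hu.2.1, hu.2.2⟩ ⟨hv.2.1, hv.2.2⟩ n
  calc |u.1 ^ m * u.2 ^ n - v.1 ^ m * v.2 ^ n|
      ≤ |(u.1 ^ m - v.1 ^ m) * u.2 ^ n| + |v.1 ^ m * (u.2 ^ n - v.2 ^ n)| := by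
        rw [h1]; exact abs_add_le _ _
    _ ≤ |u.1 ^ m - v.1 ^ m| + |u.2 ^ n - v.2 ^ n| := by
        rw [abs_mul, abs_mul]
        have := abs_nonneg (u.1 ^ m - v.1 ^ m); have := abs_nonneg (u.2 ^ n - v.2 ^ n)
        nlinarith
    _ ≤ _ := by linarith


/-- If `g` has (one-sided) derivative `f t` on `Ici 0` and `f ≥ c` on `(a,b) ⊆ (0,∞)`,
then `g b - g a ≥ c (b - a)`. -/
lemma slope_lower {g f : ℝ → ℝ}
    (hd : ∀ t ∈ Ici (0:ℝ), HasDerivWithinAt g (f t) (Ici 0) t)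
    {a b c : ℝ} (ha : 0 ≤ a) (hab : a ≤ b)
    (hf : ∀ t ∈ Ioo a b, c ≤ f t) : c * (b - a) ≤ g b - g a := by
  have hmono : MonotoneOn (fun t => g t - c * t) (Icc a b) := by
    apply monotoneOn_of_deriv_nonneg (convex_Icc a b)
    · apply ContinuousOn.sub
      · exact fun t ht => ((hd t (le_trans ha ht.1)).continuousWithinAt).mono
          (fun s hs => le_trans ha hs.1)
      · exact (continuous_const.mul continuous_id).continuousOn
    · intro t ht
      rw [interior_Icc] at ht
      have h0 : (0:ℝ) < t := lt_of_le_of_lt ha ht.1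
      have := ((hd t h0.le).hasDerivAt (Ici_mem_nhds h0)).sub
        ((hasDerivAt_id t).const_mul c)
      exact this.differentiableAt.differentiableWithinAt
    · intro t ht
      rw [interior_Icc] at ht
      have h0 : (0:ℝ) < t := lt_of_le_of_lt ha ht.1
      have hder := ((hd t h0.le).hasDerivAt (Ici_mem_nhds h0)).sub
        ((hasDerivAt_id t).const_mul c)
      have hder' : HasDerivAt (fun s => g s - c * s) (f t - c * 1) t := hder
      rw [hder'.deriv]
      simp only [mul_one]
      linarith [hf t ht]
  have := hmono (left_mem_Icc.mpr hab) (right_mem_Icc.mpr hab) hab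
  simp only at this
  linarith

lemma slope_upper {g f : ℝ → ℝ}
    (hd : ∀ t ∈ Ici (0:ℝ), HasDerivWithinAt g (f t) (Ici 0) t)
    {a b c : ℝ} (ha : 0 ≤ a) (hab : a ≤ b)
    (hf : ∀ t ∈ Ioo a b, f t ≤ c) : g b - g a ≤ c * (b - a) := by
  have hd' : ∀ t ∈ Ici (0:ℝ), HasDerivWithinAt (fun s => -(g s)) (-(f t)) (Ici 0) t :=
    fun t ht => (hd t ht).neg
  have := slope_lower hd' ha hab (c := -c) (fun t ht => neg_le_neg (hf t ht))
  linarith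

lemma monotoneOn_of_sign {g f : ℝ → ℝ}
    (hd : ∀ t ∈ Ici (0:ℝ), HasDerivWithinAt g (f t) (Ici 0) t)
    {T₀ : ℝ} (hT₀ : 0 ≤ T₀) (hs : ∀ t ∈ Ioi T₀, 0 ≤ f t) :
    MonotoneOn g (Ici T₀) := by
  intro s hs' t ht' hst
  have := slope_lower hd (le_trans hT₀ hs') hst (c := 0)
    (fun r hr => hs r (lt_of_le_of_lt hs' hr.1))
  linarith

/-- monotone bounded convergence on a tail. -/
lemma tendsto_of_monotoneOn_tail {g : ℝ → ℝ} {T₀ : ℝ}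
    (hm : MonotoneOn g (Ici T₀)) (hb : ∀ t ∈ Ici T₀, g t ≤ 1) :
    ∃ p, Tendsto g atTop (nhds p) := by
  set g' : ℝ → ℝ := fun t => g (max t T₀) with hg'
  have hmono : Monotone g' := by
    intro s t hst
    exact hm (le_max_right s T₀) (le_max_right t T₀) (max_le_max hst le_rfl)
  have hbdd : BddAbove (Set.range g') := by
    refine ⟨1, ?_⟩
    rintro _ ⟨t, rfl⟩
    exact hb _ (le_max_right t T₀)
  refine ⟨⨆ t, g' t, ?_⟩
  have h1 := tendsto_atTop_ciSup hmono hbdd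
  apply h1.congr'
  filter_upwards [eventually_ge_atTop T₀] with t ht
  simp [hg', max_eq_left ht]

lemma exists_lim_of_sign {g f : ℝ → ℝ}
    (hd : ∀ t ∈ Ici (0:ℝ), HasDerivWithinAt g (f t) (Ici 0) t)
    (hbox : ∀ t ∈ Ici (0:ℝ), g t ∈ Icc (0:ℝ) 1)
    {T₀ : ℝ} (hT₀ : 0 ≤ T₀)
    (hsign : (∀ t ∈ Ioi T₀, 0 ≤ f t) ∨ (∀ t ∈ Ioi T₀, f t ≤ 0)) :
    ∃ p ∈ Icc (0:ℝ) 1, Tendsto g atTop (nhds p) := by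
  have key : ∃ p, Tendsto g atTop (nhds p) := by
    rcases hsign with hpos | hneg
    · exact tendsto_of_monotoneOn_tail (monotoneOn_of_sign hd hT₀ hpos)
        (fun t ht => (hbox t (le_trans hT₀ ht)).2)
    · have hd' : ∀ t ∈ Ici (0:ℝ), HasDerivWithinAt (fun s => -(g s)) (-(f t)) (Ici 0) t :=
        fun t ht => (hd t ht).neg
      have hm : MonotoneOn (fun s => -(g s)) (Ici T₀) :=
        monotoneOn_of_sign hd' hT₀ (fun t ht => by linarith [hneg t ht])
      obtain ⟨p, hp⟩ := tendsto_of_monotoneOn_tail hm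
        (fun t ht => by linarith [(hbox t (le_trans hT₀ ht)).1])
      exact ⟨-p, by simpa using hp.neg⟩
  obtain ⟨p, hp⟩ := key
  refine ⟨p, ⟨?_, ?_⟩, hp⟩
  · exact ge_of_tendsto hp (by filter_upwards [eventually_ge_atTop (0:ℝ)] with t ht
      using (hbox t ht).1)
  · exact le_of_tendsto hp (by filter_upwards [eventually_ge_atTop (0:ℝ)] with t ht
      using (hbox t ht).2)

/-- If `g` stays in `[0,1]` and its derivative tends to `a`, then `a = 0`. -/
lemma deriv_limit_zero {g f : ℝ → ℝ}
    (hd : ∀ t ∈ Ici (0:ℝ), HasDerivWithinAt g (f t) (Ici 0) t)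
    (hbox : ∀ t ∈ Ici (0:ℝ), g t ∈ Icc (0:ℝ) 1)
    {a : ℝ} (hf : Tendsto f atTop (nhds a)) : a = 0 := by
  by_contra hne
  rcases lt_or_gt_of_ne hne with hneg | hpos
  · -- a < 0 : g decreases linearly, goes below 0
    have hev : ∀ᶠ t in atTop, f t ≤ a / 2 :=
      hf.eventually (eventually_le_nhds (by linarith))
    obtain ⟨T₁, hT₁⟩ := (hev.and (eventually_ge_atTop (0:ℝ))).exists_forall_of_atTop
    have hpos4 : 0 < -4 / a := by rw [div_pos_iff]; right; constructor <;> linarith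
    set t := T₁ + (-4 / a) with hts
    have hT₁0 : 0 ≤ T₁ := (hT₁ T₁ le_rfl).2
    have htT : T₁ ≤ t := le_add_of_nonneg_right hpos4.le
    have := slope_upper hd hT₁0 htT (c := a / 2)
      (fun r hr => (hT₁ r hr.1.le).1)
    have h1 : a / 2 * (t - T₁) = -2 := by
      rw [hts]; field_simp; ring
    have hg1 : g T₁ ≤ 1 := (hbox T₁ hT₁0).2
    have hg0 : 0 ≤ g t := (hbox t (le_trans hT₁0 htT)).1
    linarith
  · have hev : ∀ᶠ t in atTop, a / 2 ≤ f t :=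
      hf.eventually (eventually_ge_nhds (by linarith))
    obtain ⟨T₁, hT₁⟩ := (hev.and (eventually_ge_atTop (0:ℝ))).exists_forall_of_atTop
    have hpos4 : 0 < 4 / a := div_pos (by norm_num) hpos
    set t := T₁ + (4 / a) with hts
    have hT₁0 : 0 ≤ T₁ := (hT₁ T₁ le_rfl).2
    have htT : T₁ ≤ t := le_add_of_nonneg_right hpos4.le
    have := slope_lower hd hT₁0 htT (c := a / 2)
      (fun r hr => (hT₁ r hr.1.le).1)
    have h1 : a / 2 * (t - T₁) = 2 := by
      rw [hts]; field_simp; ring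
    have hg0 : 0 ≤ g T₁ := (hbox T₁ hT₁0).1
    have hg1 : g t ≤ 1 := (hbox t (le_trans hT₁0 htT)).2
    linarith

set_option maxHeartbeats 1000000 in
lemma core_false (G : ℝ → ℝ × ℝ) (P₁ P₂ H₁ : ℝ × ℝ → ℝ) (c₁ L ε t₀ T : ℝ)
    (hL : 1 ≤ L) (hc₁ : c₁ ≤ 0) (hε : 0 < ε) (ht₀ : 0 ≤ t₀) (hT : t₀ < T)
    (hmemG : ∀ t ∈ Ici (0:ℝ), G t ∈ K)
    (hd₁ : ∀ t ∈ Ici (0:ℝ), HasDerivWithinAt (fun s => (G s).1) (P₁ (G t)) (Ici 0) t)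
    (hd₂ : ∀ t ∈ Ici (0:ℝ), HasDerivWithinAt (fun s => (G s).2) (P₂ (G t)) (Ici 0) t)
    (hdecomp : ∀ u ∈ K, P₁ u = c₁ * u.1 + H₁ u)
    (hmono : ∀ u ∈ K, ∀ v ∈ K, u ≤ v → H₁ u ≤ H₁ v)
    (hlip : ∀ u ∈ K, ∀ v ∈ K, |H₁ u - H₁ v| ≤ L * (|u.1 - v.1| + |u.2 - v.2|))
    (hcont : ContinuousOn (fun t => P₁ (G t)) (Ici 0))
    (hstart : 0 ≤ P₁ (G t₀))
    (hbefore : ∀ t ∈ Ico t₀ T,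
        -(ε * Real.exp (8 * L * (t - t₀))) < P₁ (G t)
        ∧ -(ε * Real.exp (8 * L * (t - t₀))) < P₂ (G t))
    (hfailT : P₁ (G T) ≤ -(ε * Real.exp (8 * L * (T - t₀)))) : False := by
  have hL0 : (0:ℝ) < L := lt_of_lt_of_le one_pos hL
  set M := ε * Real.exp (8 * L * (T - t₀)) with hMdef
  have hM : 0 < M := by positivity
  have hψle : ∀ t, t ≤ T → ε * Real.exp (8 * L * (t - t₀)) ≤ M := by
    intro t ht
    rw [hMdef]
    have : Real.exp (8 * L * (t - t₀)) ≤ Real.exp (8 * L * (T - t₀)) :=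
      Real.exp_le_exp.mpr (by nlinarith)
    nlinarith
  -- the last time f₁ was above -(M/2)
  set B := Icc t₀ T ∩ (fun t => P₁ (G t)) ⁻¹' Ici (-(M/2)) with hBdef
  have hBclosed : IsClosed B :=
    ContinuousOn.preimage_isClosed_of_isClosed
      (hcont.mono (fun s hs => le_trans ht₀ hs.1)) isClosed_Icc isClosed_Ici
  have hBne : t₀ ∈ B := by
    refine ⟨⟨le_rfl, hT.le⟩, ?_⟩
    simp only [Set.mem_preimage, Set.mem_Ici]
    linarith
  have hBbdd : BddAbove B := ⟨T, fun s hs => hs.1.2⟩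
  set σ := sSup B with hσdef
  have hσB : σ ∈ B := hBclosed.csSup_mem ⟨t₀, hBne⟩ hBbdd
  have hσmem : σ ∈ Icc t₀ T := hσB.1
  have hσf : -(M/2) ≤ P₁ (G σ) := hσB.2
  have hσT : σ < T := by
    rcases lt_or_eq_of_le hσmem.2 with h | h
    · exact h
    · exfalso; rw [h] at hσf; linarith
  have hafter : ∀ t, σ < t → t ≤ T → P₁ (G t) < -(M/2) := by
    intro t h1 h2
    by_contra hcon
    push_neg at hcon
    have : t ∈ B := ⟨⟨le_trans hσmem.1 h1.le, h2⟩, hcon⟩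
    exact absurd (le_csSup hBbdd this) (not_le.mpr h1)
  set τ := max σ (T - 1/(8*L)) with hτdef
  have hτσ : σ ≤ τ := le_max_left _ _
  have hτT : τ < T := by
    apply max_lt hσT
    have : 0 < 1/(8*L) := by positivity
    linarith
  have hτt₀ : t₀ ≤ τ := le_trans hσmem.1 hτσ
  have hτ0 : (0:ℝ) ≤ τ := le_trans ht₀ hτt₀
  have hT0 : (0:ℝ) ≤ T := le_trans hτ0 hτT.le
  set δ := T - τ with hδdef
  have hδ0 : 0 < δ := by simp [hδdef]; linarith
  have hδle : δ ≤ 1/(8*L) := by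
    have h := le_max_right σ (T - 1/(8*L))
    rw [← hτdef] at h
    simp only [hδdef]
    linarith
  -- bounds on derivatives in (τ, T)
  have hIoosub : ∀ t ∈ Ioo τ T, t ∈ Ico t₀ T := fun t ht => ⟨le_trans hτt₀ ht.1.le, ht.2⟩
  have hlow₁ : ∀ t ∈ Ioo τ T, -M ≤ P₁ (G t) := by
    intro t ht
    have := (hbefore t (hIoosub t ht)).1
    have := hψle t ht.2.le
    linarith
  have hlow₂ : ∀ t ∈ Ioo τ T, -M ≤ P₂ (G t) := by
    intro t ht
    have := (hbefore t (hIoosub t ht)).2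
    have := hψle t ht.2.le
    linarith
  have hneg₁ : ∀ t ∈ Ioo τ T, P₁ (G t) ≤ 0 := by
    intro t ht
    have := hafter t (lt_of_le_of_lt hτσ ht.1) ht.2.le
    linarith
  -- G₁ is nonincreasing on [τ,T]
  have hG1dec : (G T).1 - (G τ).1 ≤ 0 := by
    have := slope_upper hd₁ hτ0 hτT.le (c := 0) hneg₁
    linarith
  -- both coordinates decrease at most at rate M
  have hG1low : -(M * δ) ≤ (G T).1 - (G τ).1 := by
    have := slope_lower hd₁ hτ0 hτT.le (c := -M) hlow₁
    simp only [hδdef]; linarith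
  have hG2low : -(M * δ) ≤ (G T).2 - (G τ).2 := by
    have := slope_lower hd₂ hτ0 hτT.le (c := -M) hlow₂
    simp only [hδdef]; linarith
  -- monotone + Lipschitz estimate on H₁
  have hu : G T ∈ K := hmemG T hT0
  have hv : G τ ∈ K := hmemG τ hτ0
  have huK := (mem_K_iff (G T)).mp hu
  have hvK := (mem_K_iff (G τ)).mp hv
  set w : ℝ × ℝ := (min (G T).1 (G τ).1, min (G T).2 (G τ).2) with hwdef
  have hwK : w ∈ K := by
    rw [mem_K_iff]
    constructor
    · exact ⟨le_min huK.1.1 hvK.1.1, le_trans (min_le_left _ _) huK.1.2⟩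
    · exact ⟨le_min huK.2.1 hvK.2.1, le_trans (min_le_left _ _) huK.2.2⟩
  have hwu : w ≤ G T := ⟨min_le_left _ _, min_le_left _ _⟩
  have hmono1 : H₁ w ≤ H₁ (G T) := hmono w hwK (G T) hu hwu
  have hlip1 : |H₁ w - H₁ (G τ)| ≤ L * (((G τ).1 - w.1) + ((G τ).2 - w.2)) := by
    have := hlip w hwK (G τ) hv
    have e1 : |w.1 - (G τ).1| = (G τ).1 - w.1 := by
      rw [abs_sub_comm]; exact abs_of_nonneg (by simp [hwdef, min_le_right])
    have e2 : |w.2 - (G τ).2| = (G τ).2 - w.2 := by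
      rw [abs_sub_comm]; exact abs_of_nonneg (by simp [hwdef, min_le_right])
    rw [e1, e2] at this
    exact this
  have hw1 : (G τ).1 - w.1 ≤ M * δ := by
    rcases min_cases ((G T).1) ((G τ).1) with ⟨he, _⟩ | ⟨he, _⟩ <;>
      simp only [hwdef, he] <;> [linarith; linarith]
  have hw2 : (G τ).2 - w.2 ≤ M * δ := by
    rcases min_cases ((G T).2) ((G τ).2) with ⟨he, _⟩ | ⟨he, _⟩ <;>
      simp only [hwdef, he] <;> [linarith; linarith]
  have hH : H₁ (G τ) - 2 * L * M * δ ≤ H₁ (G T) := by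
    have h1 : H₁ (G τ) - H₁ w ≤ L * (((G τ).1 - w.1) + ((G τ).2 - w.2)) := by
      have := abs_le.mp hlip1
      linarith [this.1]
    have h2 : L * (((G τ).1 - w.1) + ((G τ).2 - w.2)) ≤ L * (M * δ + M * δ) := by
      apply mul_le_mul_of_nonneg_left _ hL0.le
      linarith
    nlinarith
  -- combine
  have hfT : P₁ (G T) = c₁ * (G T).1 + H₁ (G T) := hdecomp _ hu
  have hfτ : P₁ (G τ) = c₁ * (G τ).1 + H₁ (G τ) := hdecomp _ hv
  have hcmp : c₁ * (G τ).1 ≤ c₁ * (G T).1 :=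
    mul_le_mul_of_nonpos_left (by linarith) hc₁
  have hchain : P₁ (G τ) - 2 * L * M * δ ≤ P₁ (G T) := by
    rw [hfT, hfτ]; linarith
  -- lower bound for f₁ τ
  have hfτlow : -(M/2) ≤ P₁ (G τ) := by
    rcases max_cases σ (T - 1/(8*L)) with ⟨he, _⟩ | ⟨he, hle⟩
    · rw [show τ = σ from he]; exact hσf
    · have hτIco : τ ∈ Ico t₀ T := ⟨hτt₀, hτT⟩
      have hb := (hbefore τ hτIco).1
      have hexp : ε * Real.exp (8 * L * (τ - t₀)) ≤ M / 2 := by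
        have hτeq : 8 * L * (τ - t₀) = 8 * L * (T - t₀) - 1 := by
          rw [hτdef, he]
          field_simp
          ring
        rw [hτeq, Real.exp_sub, hMdef]
        have h2e : (2:ℝ) ≤ Real.exp 1 := by
          have := Real.add_one_le_exp 1; linarith
        have hE : (0:ℝ) ≤ Real.exp (8 * L * (T - t₀)) := (Real.exp_pos _).le
        have key : Real.exp (8 * L * (T - t₀)) / Real.exp 1
            ≤ Real.exp (8 * L * (T - t₀)) / 2 := by
          gcongr
        calc ε * (Real.exp (8 * L * (T - t₀)) / Real.exp 1)
            ≤ ε * (Real.exp (8 * L * (T - t₀)) / 2) :=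
              mul_le_mul_of_nonneg_left key hε.le
          _ = ε * Real.exp (8 * L * (T - t₀)) / 2 := by ring
      linarith
  have hδM : 2 * L * M * δ ≤ M / 4 := by
    have : 2 * L * δ ≤ 1/4 := by
      have := mul_le_mul_of_nonneg_left hδle (by linarith : (0:ℝ) ≤ 2 * L)
      rw [mul_one_div] at this
      calc 2 * L * δ ≤ 2 * L / (8 * L) := this
        _ = 1/4 := by field_simp; ring
    nlinarith
  clear_value M σ τ δ w
  linarith [hchain, hfτlow, hδM, hfailT, hM]

/-- Invariance of the nonnegative-sign region for a planar cooperative system. -/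
lemma invariance_pos (G : ℝ → ℝ × ℝ) (P₁ P₂ H₁ H₂ : ℝ × ℝ → ℝ) (c₁ c₂ L t₀ : ℝ)
    (hL : 1 ≤ L) (hc₁ : c₁ ≤ 0) (hc₂ : c₂ ≤ 0) (ht₀ : 0 ≤ t₀)
    (hmemG : ∀ t ∈ Ici (0:ℝ), G t ∈ K)
    (hd₁ : ∀ t ∈ Ici (0:ℝ), HasDerivWithinAt (fun s => (G s).1) (P₁ (G t)) (Ici 0) t)
    (hd₂ : ∀ t ∈ Ici (0:ℝ), HasDerivWithinAt (fun s => (G s).2) (P₂ (G t)) (Ici 0) t)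
    (hdecomp₁ : ∀ u ∈ K, P₁ u = c₁ * u.1 + H₁ u)
    (hdecomp₂ : ∀ u ∈ K, P₂ u = c₂ * u.2 + H₂ u)
    (hmono₁ : ∀ u ∈ K, ∀ v ∈ K, u ≤ v → H₁ u ≤ H₁ v)
    (hmono₂ : ∀ u ∈ K, ∀ v ∈ K, u ≤ v → H₂ u ≤ H₂ v)
    (hlip₁ : ∀ u ∈ K, ∀ v ∈ K, |H₁ u - H₁ v| ≤ L * (|u.1 - v.1| + |u.2 - v.2|))
    (hlip₂ : ∀ u ∈ K, ∀ v ∈ K, |H₂ u - H₂ v| ≤ L * (|u.1 - v.1| + |u.2 - v.2|))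
    (hcont₁ : ContinuousOn (fun t => P₁ (G t)) (Ici 0))
    (hcont₂ : ContinuousOn (fun t => P₂ (G t)) (Ici 0))
    (h₁ : 0 ≤ P₁ (G t₀)) (h₂ : 0 ≤ P₂ (G t₀)) :
    ∀ t, t₀ ≤ t → 0 ≤ P₁ (G t) ∧ 0 ≤ P₂ (G t) := by
  -- swapped system data
  set G' : ℝ → ℝ × ℝ := fun t => ((G t).2, (G t).1) with hG'def
  have hmemG' : ∀ t ∈ Ici (0:ℝ), G' t ∈ K := by
    intro t ht
    have := (mem_K_iff (G t)).mp (hmemG t ht)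
    rw [mem_K_iff]
    exact ⟨this.2, this.1⟩
  have hswapK : ∀ u : ℝ × ℝ, u ∈ K → ((u.2, u.1) : ℝ × ℝ) ∈ K := by
    intro u hu
    have := (mem_K_iff u).mp hu
    rw [mem_K_iff]
    exact ⟨this.2, this.1⟩
  -- main ε-claim
  have main : ∀ ε > (0:ℝ), ∀ t, t₀ ≤ t →
      -(ε * Real.exp (8 * L * (t - t₀))) < P₁ (G t)
      ∧ -(ε * Real.exp (8 * L * (t - t₀))) < P₂ (G t) := by
    intro ε hε
    by_contra hcon
    push_neg at hcon
    obtain ⟨t₁, ht₁, hbad⟩ := hcon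
    -- the set of failure times
    set A : Set ℝ := (Ici t₀ ∩ (fun t => P₁ (G t) + ε * Real.exp (8 * L * (t - t₀))) ⁻¹' Iic 0)
      ∪ (Ici t₀ ∩ (fun t => P₂ (G t) + ε * Real.exp (8 * L * (t - t₀))) ⁻¹' Iic 0) with hAdef
    have hconte : Continuous (fun t : ℝ => ε * Real.exp (8 * L * (t - t₀))) :=
      continuous_const.mul (Real.continuous_exp.comp
        (continuous_const.mul (continuous_id.sub continuous_const)))
    have hAclosed : IsClosed A := by
      apply IsClosed.union
      · exact ContinuousOn.preimage_isClosed_of_isClosed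
          ((hcont₁.mono (fun s hs => le_trans ht₀ hs)).add (hconte.continuousOn))
          isClosed_Ici isClosed_Iic
      · exact ContinuousOn.preimage_isClosed_of_isClosed
          ((hcont₂.mono (fun s hs => le_trans ht₀ hs)).add (hconte.continuousOn))
          isClosed_Ici isClosed_Iic
    have hAne : t₁ ∈ A := by
      by_cases hb : -(ε * Real.exp (8 * L * (t₁ - t₀))) < P₁ (G t₁)
      · right
        have := hbad hb
        exact ⟨ht₁, by simp only [Set.mem_preimage, Set.mem_Iic]; linarith⟩
      · left
        push_neg at hb
        exact ⟨ht₁, by simp only [Set.mem_preimage, Set.mem_Iic]; linarith⟩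
    have hAbdd : BddBelow A := ⟨t₀, by rintro s (⟨hs, _⟩ | ⟨hs, _⟩) <;> exact hs⟩
    set T := sInf A with hTdef
    have hTA : T ∈ A := hAclosed.csInf_mem ⟨t₁, hAne⟩ hAbdd
    have hTt₀ : t₀ ≤ T := by rcases hTA with ⟨hs, _⟩ | ⟨hs, _⟩ <;> exact hs
    have ht₀A : t₀ ∉ A := by
      rintro (⟨_, hs⟩ | ⟨_, hs⟩) <;>
        simp only [Set.mem_preimage, Set.mem_Iic, sub_self, mul_zero, Real.exp_zero,
          mul_one] at hs <;> linarith
    have hT : t₀ < T := lt_of_le_of_ne hTt₀ (fun h => ht₀A (h ▸ hTA))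
    have hbefore : ∀ t ∈ Ico t₀ T,
        -(ε * Real.exp (8 * L * (t - t₀))) < P₁ (G t)
        ∧ -(ε * Real.exp (8 * L * (t - t₀))) < P₂ (G t) := by
      intro t ht
      have hnA : t ∉ A := notMem_of_lt_csInf ht.2 hAbdd
      constructor
      · by_contra hc; push_neg at hc
        exact hnA (Or.inl ⟨ht.1, by simp only [Set.mem_preimage, Set.mem_Iic]; linarith⟩)
      · by_contra hc; push_neg at hc
        exact hnA (Or.inr ⟨ht.1, by simp only [Set.mem_preimage, Set.mem_Iic]; linarith⟩)
    -- at T one of the two fails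
    have hfail : P₁ (G T) ≤ -(ε * Real.exp (8 * L * (T - t₀)))
        ∨ P₂ (G T) ≤ -(ε * Real.exp (8 * L * (T - t₀))) := by
      rcases hTA with ⟨_, hs⟩ | ⟨_, hs⟩
      · left; simp only [Set.mem_preimage, Set.mem_Iic] at hs; linarith
      · right; simp only [Set.mem_preimage, Set.mem_Iic] at hs; linarith
    rcases hfail with hf | hf
    · exact core_false G P₁ P₂ H₁ c₁ L ε t₀ T hL hc₁ hε ht₀ hT hmemG hd₁ hd₂
        hdecomp₁ hmono₁ hlip₁ hcont₁ h₁ hbefore hf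
    · -- apply to the coordinate-swapped system
      apply core_false G' (fun u => P₂ (u.2, u.1)) (fun u => P₁ (u.2, u.1))
        (fun u => H₂ (u.2, u.1)) c₂ L ε t₀ T hL hc₂ hε ht₀ hT hmemG'
      · intro t ht; exact hd₂ t ht
      · intro t ht; exact hd₁ t ht
      · intro u hu; exact hdecomp₂ _ (hswapK u hu)
      · intro u hu v hv huv
        exact hmono₂ _ (hswapK u hu) _ (hswapK v hv) ⟨huv.2, huv.1⟩
      · intro u hu v hv
        have := hlip₂ _ (hswapK u hu) _ (hswapK v hv)
        simpa [add_comm] using this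
      · exact hcont₂
      · exact h₂
      · intro t ht; exact ⟨(hbefore t ht).2, (hbefore t ht).1⟩
      · exact hf
  -- let ε → 0
  intro t ht
  constructor
  · by_contra hc
    push_neg at hc
    have hE : 0 < Real.exp (8 * L * (t - t₀)) := Real.exp_pos _
    set ε := -P₁ (G t) / (2 * Real.exp (8 * L * (t - t₀))) with hεdef
    have hε : 0 < ε := by apply div_pos (by linarith) (by positivity)
    have := (main ε hε t ht).1
    rw [hεdef] at this
    rw [div_mul_eq_mul_div, mul_comm (2:ℝ) _, ← div_div, mul_div_assoc] at this
    rw [div_self hE.ne'] at this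
    simp only [mul_one] at this
    linarith
  · by_contra hc
    push_neg at hc
    have hE : 0 < Real.exp (8 * L * (t - t₀)) := Real.exp_pos _
    set ε := -P₂ (G t) / (2 * Real.exp (8 * L * (t - t₀))) with hεdef
    have hε : 0 < ε := by apply div_pos (by linarith) (by positivity)
    have := (main ε hε t ht).2
    rw [hεdef] at this
    rw [div_mul_eq_mul_div, mul_comm (2:ℝ) _, ← div_div, mul_div_assoc] at this
    rw [div_self hE.ne'] at this
    simp only [mul_one] at this
    linarith

section series
variable (w : ℕ × ℕ → ℝ) (e : ℕ × ℕ)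

/-- coefficients with the distinguished index removed -/
noncomputable def wwc : ℕ × ℕ → ℝ := fun j => if j = e then 0 else w j

/-- the monotone part of the generating function -/
noncomputable def Hfun : ℝ × ℝ → ℝ := fun u => ∑' j : ℕ × ℕ, wwc w e j * u.1 ^ j.1 * u.2 ^ j.2

/-- the Lipschitz constant -/
noncomputable def Lam : ℝ := ∑' j : ℕ × ℕ, wwc w e j * ((j.1 : ℝ) + (j.2 : ℝ))

variable (hw : ∀ j, j ≠ e → 0 ≤ w j)
    (hsum : Summable (fun j : ℕ × ℕ => if j = e then 0 else w j))
    (hmom : Summable (fun j : ℕ × ℕ => if j = e then 0 else w j * ((j.1 : ℝ) + (j.2 : ℝ))))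

include hw hsum in
lemma wwc_nonneg : ∀ j, 0 ≤ wwc w e j := by
  intro j
  unfold wwc
  by_cases h : j = e <;> simp [h]
  exact hw j h

include hw hsum in
lemma summable_wwc_pow {x : ℝ × ℝ} (hx : x ∈ K) :
    Summable (fun j : ℕ × ℕ => wwc w e j * x.1 ^ j.1 * x.2 ^ j.2) := by
  rw [mem_K_iff] at hx
  apply Summable.of_nonneg_of_le (f := fun j => wwc w e j)
  · intro j
    have h0 := wwc_nonneg w e hw hsum j
    exact mul_nonneg (mul_nonneg h0 (pow_nonneg hx.1.1 _)) (pow_nonneg hx.2.1 _)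
  · intro j
    have h1 : x.1 ^ j.1 ≤ 1 := pow_le_one₀ hx.1.1 hx.1.2
    have h2 : x.2 ^ j.2 ≤ 1 := pow_le_one₀ hx.2.1 hx.2.2
    have h0 := wwc_nonneg w e hw hsum j
    have p1 : (0:ℝ) ≤ x.1 ^ j.1 := pow_nonneg hx.1.1 _
    have p2 : (0:ℝ) ≤ x.2 ^ j.2 := pow_nonneg hx.2.1 _
    calc wwc w e j * x.1 ^ j.1 * x.2 ^ j.2 ≤ wwc w e j * x.1 ^ j.1 :=
          mul_le_of_le_one_right (mul_nonneg h0 p1) h2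
      _ ≤ wwc w e j := mul_le_of_le_one_right h0 h1
  · exact hsum.congr (fun j => by unfold wwc; rfl)

include hw hsum in
lemma summable_full_pow {x : ℝ × ℝ} (hx : x ∈ K) :
    Summable (fun j : ℕ × ℕ => w j * x.1 ^ j.1 * x.2 ^ j.2) := by
  have heq : (fun j : ℕ × ℕ => w j * x.1 ^ j.1 * x.2 ^ j.2)
      = fun j => wwc w e j * x.1 ^ j.1 * x.2 ^ j.2
        + (if j = e then w e * x.1 ^ e.1 * x.2 ^ e.2 else 0) := by
    funext j
    by_cases h : j = e <;> simp [wwc, h]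
  rw [heq]
  exact (summable_wwc_pow w e hw hsum hx).add
    (summable_of_ne_finset_zero (s := {e}) (by intro b hb; simp at hb; simp [hb]))

include hw hsum in
lemma tsum_decomp {x : ℝ × ℝ} (hx : x ∈ K) :
    ∑' j : ℕ × ℕ, w j * x.1 ^ j.1 * x.2 ^ j.2
      = w e * x.1 ^ e.1 * x.2 ^ e.2 + Hfun w e x := by
  have heq : ∀ j : ℕ × ℕ, w j * x.1 ^ j.1 * x.2 ^ j.2
      = (if j = e then w e * x.1 ^ e.1 * x.2 ^ e.2 else 0)
        + wwc w e j * x.1 ^ j.1 * x.2 ^ j.2 := by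
    intro j
    by_cases h : j = e <;> simp [wwc, h]
  calc ∑' j : ℕ × ℕ, w j * x.1 ^ j.1 * x.2 ^ j.2
      = ∑' j : ℕ × ℕ, ((if j = e then w e * x.1 ^ e.1 * x.2 ^ e.2 else 0)
          + wwc w e j * x.1 ^ j.1 * x.2 ^ j.2) := by
        exact tsum_congr heq
    _ = (∑' j : ℕ × ℕ, if j = e then w e * x.1 ^ e.1 * x.2 ^ e.2 else 0)
          + ∑' j : ℕ × ℕ, wwc w e j * x.1 ^ j.1 * x.2 ^ j.2 := by
        apply Summable.tsum_add
        · exact summable_of_ne_finset_zero (s := {e}) (by intro b hb; simp at hb; simp [hb])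
        · exact summable_wwc_pow w e hw hsum hx
    _ = w e * x.1 ^ e.1 * x.2 ^ e.2 + Hfun w e x := by
        congr 1
        rw [tsum_eq_sum (s := {e}) (by intro b hb; simp at hb; simp [hb])]
        simp

include hw hsum in
lemma Hfun_mono : ∀ u ∈ K, ∀ v ∈ K, u ≤ v → Hfun w e u ≤ Hfun w e v := by
  intro u hu v hv huv
  have huK := (mem_K_iff u).mp hu
  have hvK := (mem_K_iff v).mp hv
  apply Summable.tsum_le_tsum _ (summable_wwc_pow w e hw hsum hu) (summable_wwc_pow w e hw hsum hv)
  intro j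
  have h0 := wwc_nonneg w e hw hsum j
  have h1 : u.1 ^ j.1 ≤ v.1 ^ j.1 := pow_le_pow_left₀ huK.1.1 huv.1 _
  have h2 : u.2 ^ j.2 ≤ v.2 ^ j.2 := pow_le_pow_left₀ huK.2.1 huv.2 _
  have p1 : (0:ℝ) ≤ u.1 ^ j.1 := pow_nonneg huK.1.1 _
  have p2 : (0:ℝ) ≤ u.2 ^ j.2 := pow_nonneg huK.2.1 _
  have p3 : (0:ℝ) ≤ v.1 ^ j.1 := pow_nonneg hvK.1.1 _
  exact mul_le_mul (mul_le_mul_of_nonneg_left h1 h0) h2 p2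
    (mul_nonneg h0 p3)

include hw hsum hmom in
lemma Hfun_lip : ∀ u ∈ K, ∀ v ∈ K,
    |Hfun w e u - Hfun w e v| ≤ Lam w e * (|u.1 - v.1| + |u.2 - v.2|) := by
  intro u hu v hv
  set D := |u.1 - v.1| + |u.2 - v.2| with hDdef
  have hD0 : 0 ≤ D := by positivity
  have hmom' : Summable (fun j : ℕ × ℕ => wwc w e j * ((j.1 : ℝ) + (j.2 : ℝ))) :=
    hmom.congr (fun j => by unfold wwc; by_cases h : j = e <;> simp [h])
  have hmomD : Summable (fun j : ℕ × ℕ => wwc w e j * ((j.1 : ℝ) + (j.2 : ℝ)) * D) :=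
    hmom'.mul_right D
  have hterm : ∀ j : ℕ × ℕ,
      |wwc w e j * u.1 ^ j.1 * u.2 ^ j.2 - wwc w e j * v.1 ^ j.1 * v.2 ^ j.2|
        ≤ wwc w e j * ((j.1 : ℝ) + (j.2 : ℝ)) * D := by
    intro j
    have h0 := wwc_nonneg w e hw hsum j
    have h1 : wwc w e j * u.1 ^ j.1 * u.2 ^ j.2 - wwc w e j * v.1 ^ j.1 * v.2 ^ j.2
        = wwc w e j * (u.1 ^ j.1 * u.2 ^ j.2 - v.1 ^ j.1 * v.2 ^ j.2) := by ring
    rw [h1, abs_mul, abs_of_nonneg h0]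
    have h2 := abs_monomial_sub_le hu hv j.1 j.2
    have h3 : (j.1 : ℝ) * |u.1 - v.1| + (j.2 : ℝ) * |u.2 - v.2|
        ≤ ((j.1 : ℝ) + (j.2 : ℝ)) * D := by
      have a1 : (0:ℝ) ≤ (j.1 : ℝ) := Nat.cast_nonneg _
      have a2 : (0:ℝ) ≤ (j.2 : ℝ) := Nat.cast_nonneg _
      have b1 : (0:ℝ) ≤ |u.1 - v.1| := abs_nonneg _
      have b2 : (0:ℝ) ≤ |u.2 - v.2| := abs_nonneg _
      simp only [hDdef]
      nlinarith
    have h4 : |u.1 ^ j.1 * u.2 ^ j.2 - v.1 ^ j.1 * v.2 ^ j.2|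
        ≤ ((j.1 : ℝ) + (j.2 : ℝ)) * D := le_trans h2 h3
    calc wwc w e j * |u.1 ^ j.1 * u.2 ^ j.2 - v.1 ^ j.1 * v.2 ^ j.2|
        ≤ wwc w e j * (((j.1 : ℝ) + (j.2 : ℝ)) * D) :=
          mul_le_mul_of_nonneg_left h4 h0
      _ = wwc w e j * ((j.1 : ℝ) + (j.2 : ℝ)) * D := by ring
  have hsub : Hfun w e u - Hfun w e v
      = ∑' j : ℕ × ℕ, (wwc w e j * u.1 ^ j.1 * u.2 ^ j.2
          - wwc w e j * v.1 ^ j.1 * v.2 ^ j.2) := by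
    unfold Hfun
    rw [Summable.tsum_sub (summable_wwc_pow w e hw hsum hu) (summable_wwc_pow w e hw hsum hv)]
  rw [hsub]
  have habs : Summable (fun j : ℕ × ℕ =>
      ‖wwc w e j * u.1 ^ j.1 * u.2 ^ j.2 - wwc w e j * v.1 ^ j.1 * v.2 ^ j.2‖) := by
    apply Summable.of_nonneg_of_le (fun j => norm_nonneg _) _ hmomD
    intro j
    simpa [Real.norm_eq_abs] using hterm j
  calc |∑' j : ℕ × ℕ, (wwc w e j * u.1 ^ j.1 * u.2 ^ j.2
          - wwc w e j * v.1 ^ j.1 * v.2 ^ j.2)|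
      ≤ ∑' j : ℕ × ℕ, ‖wwc w e j * u.1 ^ j.1 * u.2 ^ j.2
          - wwc w e j * v.1 ^ j.1 * v.2 ^ j.2‖ := by
        simpa [Real.norm_eq_abs] using norm_tsum_le_tsum_norm habs
    _ ≤ ∑' j : ℕ × ℕ, wwc w e j * ((j.1 : ℝ) + (j.2 : ℝ)) * D := by
        apply Summable.tsum_le_tsum _ habs hmomD
        intro j
        simpa [Real.norm_eq_abs] using hterm j
    _ = Lam w e * D := by
        unfold Lam
        rw [tsum_mul_right]

include hw hsum hmom in
lemma Lam_nonneg : 0 ≤ Lam w e := by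
  apply tsum_nonneg
  intro j
  have := wwc_nonneg w e hw hsum j
  positivity

end series

section bridge

/-- The `y`-weighted coefficients. -/
noncomputable def wfun (b : ℕ × ℕ → ℝ) (R : Finset (ℕ × ℕ)) (yy : {j // j ∈ R} → ℝ) :
    ℕ × ℕ → ℝ := fun j => if h : j ∈ R then b j * yy ⟨j, h⟩ else b j



lemma bridge (b : ℕ × ℕ → ℝ) (R : Finset (ℕ × ℕ)) (yy : {j // j ∈ R} → ℝ)
    (x : ℝ × ℝ)
    (hfull : Summable (fun j : ℕ × ℕ =>
      wfun b R yy j * x.1 ^ j.1 * x.2 ^ j.2)) :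
    Bpart b R x yy + Bbar b R x
      = ∑' j : ℕ × ℕ, wfun b R yy j * x.1 ^ j.1 * x.2 ^ j.2 := by
  classical
  have hpfsum : Summable (fun j : ℕ × ℕ =>
      if h : j ∈ R then b j * x.1 ^ j.1 * x.2 ^ j.2 * yy ⟨j, h⟩ else 0) :=
    summable_of_ne_finset_zero (s := R) (by intro j hj; rw [dif_neg hj])
  -- Bpart is the tsum of the partial function
  have hBpart : Bpart b R x yy = ∑' j : ℕ × ℕ,
      (if h : j ∈ R then b j * x.1 ^ j.1 * x.2 ^ j.2 * yy ⟨j, h⟩ else 0) := by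
    rw [tsum_eq_sum (s := R) (by intro j hj; rw [dif_neg hj])]
    unfold Bpart
    rw [← Finset.sum_coe_sort R
      (fun j => if h : j ∈ R then b j * x.1 ^ j.1 * x.2 ^ j.2 * yy ⟨j, h⟩ else 0)]
    apply Finset.sum_congr rfl
    intro j _
    rw [dif_pos j.2, Subtype.coe_eta]
  have hbfsum : Summable (fun j : ℕ × ℕ =>
      if j ∈ R then 0 else b j * x.1 ^ j.1 * x.2 ^ j.2) := by
    have heq : (fun j : ℕ × ℕ => if j ∈ R then 0 else b j * x.1 ^ j.1 * x.2 ^ j.2)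
        = fun j => wfun b R yy j * x.1 ^ j.1 * x.2 ^ j.2
          - (if h : j ∈ R then b j * x.1 ^ j.1 * x.2 ^ j.2 * yy ⟨j, h⟩ else 0) := by
      funext j
      simp only [wfun]
      by_cases h : j ∈ R
      · rw [if_pos h, dif_pos h, dif_pos h]; ring
      · rw [if_neg h, dif_neg h, dif_neg h]; ring
    rw [heq]
    exact hfull.sub hpfsum
  unfold Bbar
  rw [hBpart, ← Summable.tsum_add hpfsum hbfsum]
  apply tsum_congr
  intro j
  simp only [wfun]
  by_cases h : j ∈ R
  · rw [if_pos h, dif_pos h, dif_pos h]; ring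
  · rw [if_neg h, dif_neg h, dif_neg h]; ring

end bridge

section side

/-- All facts needed about the weighted coefficients of one component. -/
lemma side_data (b : ℕ × ℕ → ℝ) (R : Finset (ℕ × ℕ)) (yy : {j // j ∈ R} → ℝ) (e : ℕ × ℕ)
    (hb : ∀ j, j ≠ e → 0 ≤ b j)
    (hs : Summable (fun j : ℕ × ℕ => if j = e then 0 else b j))
    (he : b e = -∑' j : ℕ × ℕ, if j = e then 0 else b j)
    (hm1 : Summable (fun j : ℕ × ℕ => b j * (j.1 : ℝ)))
    (hm2 : Summable (fun j : ℕ × ℕ => b j * (j.2 : ℝ)))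
    (hpos : ∀ j ∈ R, 0 < b j)
    (hyy : ∀ i, yy i ∈ Ico (0:ℝ) 1) :
    e ∉ R ∧ b e ≤ 0
    ∧ (∀ j, j ≠ e → 0 ≤ wfun b R yy j)
    ∧ Summable (fun j : ℕ × ℕ => if j = e then 0
        else wfun b R yy j)
    ∧ Summable (fun j : ℕ × ℕ => if j = e then 0
        else wfun b R yy j * ((j.1 : ℝ) + (j.2 : ℝ)))
    ∧ wfun b R yy e = b e := by
  classical
  have hbe : b e ≤ 0 := by
    have h0 : 0 ≤ ∑' j : ℕ × ℕ, if j = e then 0 else b j := by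
      apply tsum_nonneg
      intro j
      by_cases h : j = e
      · simp [h]
      · simp [h, hb j h]
    rw [he]; linarith
  have heR : e ∉ R := fun h => absurd (hpos e h) (not_lt.mpr hbe)
  -- w bounds
  have hwle : ∀ j, j ≠ e → wfun b R yy j ≤ b j := by
    intro j hj
    simp only [wfun]
    by_cases h : j ∈ R
    · rw [dif_pos h]
      exact mul_le_of_le_one_right (hpos j h).le (hyy ⟨j, h⟩).2.le
    · rw [dif_neg h]
  have hwnn : ∀ j, j ≠ e → 0 ≤ wfun b R yy j := by
    intro j hj
    simp only [wfun]
    by_cases h : j ∈ R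
    · rw [dif_pos h]
      exact mul_nonneg (hpos j h).le (hyy ⟨j, h⟩).1
    · rw [dif_neg h]; exact hb j hj
  refine ⟨heR, hbe, hwnn, ?_, ?_, by simp only [wfun]; exact dif_neg heR⟩
  · apply Summable.of_nonneg_of_le _ _ hs
    · intro j
      by_cases h : j = e
      · simp [h]
      · simpa [h] using hwnn j h
    · intro j
      by_cases h : j = e
      · simp [h]
      · simpa [h] using hwle j h
  · have hmaj : Summable (fun j : ℕ × ℕ =>
        if j = e then 0 else b j * (j.1 : ℝ) + b j * (j.2 : ℝ)) := by
      have := summable_ite_point (hm1.add hm2) e 0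
      exact this.congr (fun j => by by_cases h : j = e <;> simp [h])
    apply Summable.of_nonneg_of_le _ _ hmaj
    · intro j
      by_cases h : j = e
      · simp [h]
      · simp only [h, if_false]
        exact mul_nonneg (hwnn j h) (by positivity)
    · intro j
      by_cases h : j = e
      · simp [h]
      · simp only [h, if_false]
        have h1 := hwle j h
        have h2 : (0:ℝ) ≤ (j.1 : ℝ) + (j.2 : ℝ) := by positivity
        nlinarith [hwnn j h]

end side

section hcont

lemma Hfun_contOn (w : ℕ × ℕ → ℝ) (e : ℕ × ℕ)
    (hw : ∀ j, j ≠ e → 0 ≤ w j)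
    (hsum : Summable (fun j : ℕ × ℕ => if j = e then 0 else w j))
    (hmom : Summable (fun j : ℕ × ℕ => if j = e then 0 else w j * ((j.1 : ℝ) + (j.2 : ℝ)))) :
    ContinuousOn (Hfun w e) K := by
  have hΛ : 0 ≤ Lam w e := Lam_nonneg w e hw hsum hmom
  have hlipw : LipschitzOnWith (Real.toNNReal (2 * Lam w e)) (Hfun w e) K := by
    apply LipschitzOnWith.of_dist_le_mul
    intro u hu v hv
    have hlip := Hfun_lip w e hw hsum hmom u hu v hv
    rw [Real.dist_eq, Prod.dist_eq]
    have h1 : |u.1 - v.1| ≤ dist u.1 v.1 ⊔ dist u.2 v.2 := by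
      rw [Real.dist_eq, Real.dist_eq]; exact le_max_left _ _
    have h2 : |u.2 - v.2| ≤ dist u.1 v.1 ⊔ dist u.2 v.2 := by
      rw [Real.dist_eq, Real.dist_eq]; exact le_max_right _ _
    have hc : (Real.toNNReal (2 * Lam w e) : ℝ) = 2 * Lam w e :=
      Real.coe_toNNReal _ (by linarith)
    rw [hc]
    have hd0 : (0:ℝ) ≤ dist u.1 v.1 ⊔ dist u.2 v.2 :=
      le_trans (abs_nonneg _) h1
    calc |Hfun w e u - Hfun w e v| ≤ Lam w e * (|u.1 - v.1| + |u.2 - v.2|) := hlip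
      _ ≤ Lam w e * (2 * (dist u.1 v.1 ⊔ dist u.2 v.2)) := by
          apply mul_le_mul_of_nonneg_left _ hΛ
          linarith
      _ = 2 * Lam w e * (dist u.1 v.1 ⊔ dist u.2 v.2) := by ring
  exact hlipw.continuousOn

end hcont

set_option maxHeartbeats 1000000 in
theorem ode_converges_to_root (b₁ b₂ : ℕ × ℕ → ℝ)
    (hb₁ : ∀ j : ℕ × ℕ, j ≠ (1, 0) → 0 ≤ b₁ j)
    (hb₂ : ∀ j : ℕ × ℕ, j ≠ (0, 1) → 0 ≤ b₂ j)
    (hs₁ : Summable fun j : ℕ × ℕ => if j = (1, 0) then 0 else b₁ j)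
    (hs₂ : Summable fun j : ℕ × ℕ => if j = (0, 1) then 0 else b₂ j)
    (he₁ : b₁ (1, 0) = -∑' j : ℕ × ℕ, if j = (1, 0) then 0 else b₁ j)
    (he₂ : b₂ (0, 1) = -∑' j : ℕ × ℕ, if j = (0, 1) then 0 else b₂ j)
    (hA2 : (Summable fun j : ℕ × ℕ => b₁ j * (j.1 : ℝ)) ∧
      (Summable fun j : ℕ × ℕ => b₁ j * (j.2 : ℝ)) ∧
      (Summable fun j : ℕ × ℕ => b₂ j * (j.1 : ℝ)) ∧
      (Summable fun j : ℕ × ℕ => b₂ j * (j.2 : ℝ)))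
    (hA1 : ¬ ∃ M : Matrix (Fin 2) (Fin 2) ℝ, ∀ x ∈ Set.Icc ((0 : ℝ), (0 : ℝ)) (1, 1),
      genFun b₁ x = x.1 * M 0 0 + x.2 * M 1 0 ∧ genFun b₂ x = x.1 * M 0 1 + x.2 * M 1 1)
    (hA3 : ∃ m : ℕ, ∀ i j : Fin 2, 0 < ((jacMat b₁ b₂ (1, 1)) ^ m) i j)
    (R₁ R₂ : Finset (ℕ × ℕ)) (hR₁ : R₁.Nonempty) (hR₂ : R₂.Nonempty)
    (hpos₁ : ∀ j ∈ R₁, 0 < b₁ j) (hpos₂ : ∀ j ∈ R₂, 0 < b₂ j)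
    (y : {j // j ∈ R₁} → ℝ) (z : {j // j ∈ R₂} → ℝ)
    (hy : ∀ i, y i ∈ Set.Ico (0 : ℝ) 1) (hz : ∀ i, z i ∈ Set.Ico (0 : ℝ) 1)
    (x : ℝ × ℝ) (hx : x ∈ Set.Icc ((0 : ℝ), (0 : ℝ)) (1, 1))
    (q : ℝ × ℝ) (hqmem : q ∈ Set.Icc ((0 : ℝ), (0 : ℝ)) (1, 1))
    (hq₁ : Bpart b₁ R₁ q y + Bbar b₁ R₁ q = 0) (hq₂ : Bpart b₂ R₂ q z + Bbar b₂ R₂ q = 0)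
    (hquniq : ∀ x' ∈ Set.Icc ((0 : ℝ), (0 : ℝ)) (1, 1), Bpart b₁ R₁ x' y + Bbar b₁ R₁ x' = 0 →
      Bpart b₂ R₂ x' z + Bbar b₂ R₂ x' = 0 → x' = q)
    (G : ℝ → ℝ × ℝ) (hGsol : (G 0 = x) ∧
      (∀ t ∈ Set.Ici (0 : ℝ),
        HasDerivWithinAt (fun s => (G s).1)
          (Bpart b₁ R₁ (G t) y + Bbar b₁ R₁ (G t)) (Set.Ici 0) t ∧
        HasDerivWithinAt (fun s => (G s).2)
          (Bpart b₂ R₂ (G t) z + Bbar b₂ R₂ (G t)) (Set.Ici 0) t))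
    (hGmem : ∀ t ∈ Set.Ici (0 : ℝ), G t ∈ Set.Icc ((0 : ℝ), (0 : ℝ)) (1, 1)) :
    Filter.Tendsto G Filter.atTop (nhds q) := by
  classical
  obtain ⟨hG0, hGd⟩ := hGsol
  obtain ⟨heR₁, hbe₁, hw₁nn, hsum₁, hmom₁, hwe₁⟩ :=
    side_data b₁ R₁ y (1,0) hb₁ hs₁ he₁ hA2.1 hA2.2.1 hpos₁ hy
  obtain ⟨heR₂, hbe₂, hw₂nn, hsum₂, hmom₂, hwe₂⟩ :=
    side_data b₂ R₂ z (0,1) hb₂ hs₂ he₂ hA2.2.2.1 hA2.2.2.2 hpos₂ hz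
  set P₁ : ℝ × ℝ → ℝ := fun u => Bpart b₁ R₁ u y + Bbar b₁ R₁ u with hP₁def
  set P₂ : ℝ × ℝ → ℝ := fun u => Bpart b₂ R₂ u z + Bbar b₂ R₂ u with hP₂def
  set H₁ : ℝ × ℝ → ℝ := Hfun (wfun b₁ R₁ y) (1,0) with hH₁def
  set H₂ : ℝ × ℝ → ℝ := Hfun (wfun b₂ R₂ z) (0,1) with hH₂def
  have hd₁ : ∀ t ∈ Ici (0:ℝ), HasDerivWithinAt (fun s => (G s).1) (P₁ (G t)) (Ici 0) t :=
    fun t ht => (hGd t ht).1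
  have hd₂ : ∀ t ∈ Ici (0:ℝ), HasDerivWithinAt (fun s => (G s).2) (P₂ (G t)) (Ici 0) t :=
    fun t ht => (hGd t ht).2
  -- decomposition into linear part and monotone part
  have hdecomp₁ : ∀ u ∈ K, P₁ u = b₁ (1,0) * u.1 + H₁ u := by
    intro u hu
    have hfull := summable_full_pow (wfun b₁ R₁ y) (1,0) hw₁nn hsum₁ hu
    have hb := bridge b₁ R₁ y u hfull
    have hdec := tsum_decomp (wfun b₁ R₁ y) (1,0) hw₁nn hsum₁ hu
    show Bpart b₁ R₁ u y + Bbar b₁ R₁ u = b₁ (1,0) * u.1 + H₁ u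
    rw [hH₁def, hb, hdec, hwe₁]
    norm_num
  have hdecomp₂ : ∀ u ∈ K, P₂ u = b₂ (0,1) * u.2 + H₂ u := by
    intro u hu
    have hfull := summable_full_pow (wfun b₂ R₂ z) (0,1) hw₂nn hsum₂ hu
    have hb := bridge b₂ R₂ z u hfull
    have hdec := tsum_decomp (wfun b₂ R₂ z) (0,1) hw₂nn hsum₂ hu
    show Bpart b₂ R₂ u z + Bbar b₂ R₂ u = b₂ (0,1) * u.2 + H₂ u
    rw [hH₂def, hb, hdec, hwe₂]
    norm_num
  have hmono₁ : ∀ u ∈ K, ∀ v ∈ K, u ≤ v → H₁ u ≤ H₁ v :=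
    Hfun_mono (wfun b₁ R₁ y) (1,0) hw₁nn hsum₁
  have hmono₂ : ∀ u ∈ K, ∀ v ∈ K, u ≤ v → H₂ u ≤ H₂ v :=
    Hfun_mono (wfun b₂ R₂ z) (0,1) hw₂nn hsum₂
  set L : ℝ := max 1 (max (Lam (wfun b₁ R₁ y) (1,0)) (Lam (wfun b₂ R₂ z) (0,1))) with hLdef
  have hL : 1 ≤ L := le_max_left _ _
  have hlip₁ : ∀ u ∈ K, ∀ v ∈ K, |H₁ u - H₁ v| ≤ L * (|u.1 - v.1| + |u.2 - v.2|) := by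
    intro u hu v hv
    refine le_trans (Hfun_lip (wfun b₁ R₁ y) (1,0) hw₁nn hsum₁ hmom₁ u hu v hv) ?_
    apply mul_le_mul_of_nonneg_right _ (by positivity)
    exact le_trans (le_max_left _ _) (le_max_right _ _)
  have hlip₂ : ∀ u ∈ K, ∀ v ∈ K, |H₂ u - H₂ v| ≤ L * (|u.1 - v.1| + |u.2 - v.2|) := by
    intro u hu v hv
    refine le_trans (Hfun_lip (wfun b₂ R₂ z) (0,1) hw₂nn hsum₂ hmom₂ u hu v hv) ?_
    apply mul_le_mul_of_nonneg_right _ (by positivity)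
    exact le_trans (le_max_right _ _) (le_max_right _ _)
  -- continuity of the composed vector field
  have hGc1 : ContinuousOn (fun s => (G s).1) (Ici (0:ℝ)) :=
    fun t ht => (hd₁ t ht).continuousWithinAt
  have hGc2 : ContinuousOn (fun s => (G s).2) (Ici (0:ℝ)) :=
    fun t ht => (hd₂ t ht).continuousWithinAt
  have hGc : ContinuousOn G (Ici (0:ℝ)) := hGc1.prodMk hGc2
  have hHc₁ : ContinuousOn H₁ K := Hfun_contOn (wfun b₁ R₁ y) (1,0) hw₁nn hsum₁ hmom₁
  have hHc₂ : ContinuousOn H₂ K := Hfun_contOn (wfun b₂ R₂ z) (0,1) hw₂nn hsum₂ hmom₂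
  have hcont₁ : ContinuousOn (fun t => P₁ (G t)) (Ici (0:ℝ)) := by
    apply ContinuousOn.congr
      ((continuousOn_const.mul hGc1).add (hHc₁.comp hGc (fun t ht => hGmem t ht)))
    intro t ht
    exact hdecomp₁ (G t) (hGmem t ht)
  have hcont₂ : ContinuousOn (fun t => P₂ (G t)) (Ici (0:ℝ)) := by
    apply ContinuousOn.congr
      ((continuousOn_const.mul hGc2).add (hHc₂.comp hGc (fun t ht => hGmem t ht)))
    intro t ht
    exact hdecomp₂ (G t) (hGmem t ht)
  have hbox₁ : ∀ t ∈ Ici (0:ℝ), (fun s => (G s).1) t ∈ Icc (0:ℝ) 1 := by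
    intro t ht
    have := (mem_K_iff (G t)).mp (hGmem t ht)
    exact ⟨this.1.1, this.1.2⟩
  have hbox₂ : ∀ t ∈ Ici (0:ℝ), (fun s => (G s).2) t ∈ Icc (0:ℝ) 1 := by
    intro t ht
    have := (mem_K_iff (G t)).mp (hGmem t ht)
    exact ⟨this.2.1, this.2.2⟩
  -- eventual sign of the two derivatives
  have key : ∃ T₀ : ℝ, 0 ≤ T₀
      ∧ ((∀ t ∈ Ioi T₀, 0 ≤ P₁ (G t)) ∨ (∀ t ∈ Ioi T₀, P₁ (G t) ≤ 0))
      ∧ ((∀ t ∈ Ioi T₀, 0 ≤ P₂ (G t)) ∨ (∀ t ∈ Ioi T₀, P₂ (G t) ≤ 0)) := by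
    by_cases hA : ∃ t₀, 0 ≤ t₀ ∧ 0 ≤ P₁ (G t₀) ∧ 0 ≤ P₂ (G t₀)
    · obtain ⟨t₀, ht₀, hf₁, hf₂⟩ := hA
      have hs := invariance_pos G P₁ P₂ H₁ H₂ (b₁ (1,0)) (b₂ (0,1)) L t₀
        hL hbe₁ hbe₂ ht₀ hGmem hd₁ hd₂ hdecomp₁ hdecomp₂ hmono₁ hmono₂
        hlip₁ hlip₂ hcont₁ hcont₂ hf₁ hf₂
      exact ⟨t₀, ht₀, Or.inl (fun t ht => (hs t (le_of_lt ht)).1),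
        Or.inl (fun t ht => (hs t (le_of_lt ht)).2)⟩
    by_cases hB : ∃ t₀, 0 ≤ t₀ ∧ P₁ (G t₀) ≤ 0 ∧ P₂ (G t₀) ≤ 0
    · obtain ⟨t₀, ht₀, hf₁, hf₂⟩ := hB
      -- reflected system
      set Gr : ℝ → ℝ × ℝ := fun t => (1 - (G t).1, 1 - (G t).2) with hGrdef
      have hargG : ∀ t : ℝ, ((1:ℝ) - (Gr t).1, (1:ℝ) - (Gr t).2) = G t := by
        intro t
        show ((1:ℝ) - (1 - (G t).1), (1:ℝ) - (1 - (G t).2)) = G t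
        rw [sub_sub_cancel, sub_sub_cancel]
      have hreflK : ∀ u : ℝ × ℝ, u ∈ K → ((1 - u.1, 1 - u.2) : ℝ × ℝ) ∈ K := by
        intro u hu
        have := (mem_K_iff u).mp hu
        rw [mem_K_iff]
        constructor
        · constructor <;> simp only [] <;> [linarith [this.1.2]; linarith [this.1.1]]
        · constructor <;> simp only [] <;> [linarith [this.2.2]; linarith [this.2.1]]
      have hGrmem : ∀ t ∈ Ici (0:ℝ), Gr t ∈ K :=
        fun t ht => hreflK (G t) (hGmem t ht)
      set P₁r : ℝ × ℝ → ℝ := fun u => -(P₁ (1 - u.1, 1 - u.2)) with hP₁rdef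
      set P₂r : ℝ × ℝ → ℝ := fun u => -(P₂ (1 - u.1, 1 - u.2)) with hP₂rdef
      set H₁r : ℝ × ℝ → ℝ := fun u => -(b₁ (1,0)) - H₁ (1 - u.1, 1 - u.2) with hH₁rdef
      set H₂r : ℝ × ℝ → ℝ := fun u => -(b₂ (0,1)) - H₂ (1 - u.1, 1 - u.2) with hH₂rdef
      have hP₁rG : ∀ t : ℝ, P₁r (Gr t) = -(P₁ (G t)) := by
        intro t
        show -(P₁ ((1:ℝ) - (Gr t).1, (1:ℝ) - (Gr t).2)) = -(P₁ (G t))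
        rw [hargG t]
      have hP₂rG : ∀ t : ℝ, P₂r (Gr t) = -(P₂ (G t)) := by
        intro t
        show -(P₂ ((1:ℝ) - (Gr t).1, (1:ℝ) - (Gr t).2)) = -(P₂ (G t))
        rw [hargG t]
      have hdr₁ : ∀ t ∈ Ici (0:ℝ),
          HasDerivWithinAt (fun s => (Gr s).1) (P₁r (Gr t)) (Ici 0) t := by
        intro t ht
        rw [hP₁rG t]
        exact (hd₁ t ht).const_sub 1
      have hdr₂ : ∀ t ∈ Ici (0:ℝ),
          HasDerivWithinAt (fun s => (Gr s).2) (P₂r (Gr t)) (Ici 0) t := by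
        intro t ht
        rw [hP₂rG t]
        exact (hd₂ t ht).const_sub 1
      have hdecompr₁ : ∀ u ∈ K, P₁r u = b₁ (1,0) * u.1 + H₁r u := by
        intro u hu
        show -(P₁ (1 - u.1, 1 - u.2)) = b₁ (1,0) * u.1 + (-(b₁ (1,0)) - H₁ (1 - u.1, 1 - u.2))
        rw [hdecomp₁ _ (hreflK u hu)]
        simp only []
        ring
      have hdecompr₂ : ∀ u ∈ K, P₂r u = b₂ (0,1) * u.2 + H₂r u := by
        intro u hu
        show -(P₂ (1 - u.1, 1 - u.2)) = b₂ (0,1) * u.2 + (-(b₂ (0,1)) - H₂ (1 - u.1, 1 - u.2))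
        rw [hdecomp₂ _ (hreflK u hu)]
        simp only []
        ring
      have hmonor₁ : ∀ u ∈ K, ∀ v ∈ K, u ≤ v → H₁r u ≤ H₁r v := by
        intro u hu v hv huv
        show -(b₁ (1,0)) - H₁ (1 - u.1, 1 - u.2) ≤ -(b₁ (1,0)) - H₁ (1 - v.1, 1 - v.2)
        have := hmono₁ _ (hreflK v hv) _ (hreflK u hu)
          ⟨sub_le_sub_left huv.1 1, sub_le_sub_left huv.2 1⟩
        linarith
      have hmonor₂ : ∀ u ∈ K, ∀ v ∈ K, u ≤ v → H₂r u ≤ H₂r v := by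
        intro u hu v hv huv
        show -(b₂ (0,1)) - H₂ (1 - u.1, 1 - u.2) ≤ -(b₂ (0,1)) - H₂ (1 - v.1, 1 - v.2)
        have := hmono₂ _ (hreflK v hv) _ (hreflK u hu)
          ⟨sub_le_sub_left huv.1 1, sub_le_sub_left huv.2 1⟩
        linarith
      have hlipr₁ : ∀ u ∈ K, ∀ v ∈ K,
          |H₁r u - H₁r v| ≤ L * (|u.1 - v.1| + |u.2 - v.2|) := by
        intro u hu v hv
        have key := hlip₁ _ (hreflK u hu) _ (hreflK v hv)
        have e1 : H₁r u - H₁r v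
            = -(H₁ (1 - u.1, 1 - u.2) - H₁ (1 - v.1, 1 - v.2)) := by
          show -(b₁ (1,0)) - H₁ (1 - u.1, 1 - u.2) - (-(b₁ (1,0)) - H₁ (1 - v.1, 1 - v.2)) = _
          ring
        rw [e1, abs_neg]
        have e2 : ((1:ℝ) - u.1, (1:ℝ) - u.2).1 - ((1:ℝ) - v.1, (1:ℝ) - v.2).1
            = -(u.1 - v.1) := by simp only []; ring
        have e3 : ((1:ℝ) - u.1, (1:ℝ) - u.2).2 - ((1:ℝ) - v.1, (1:ℝ) - v.2).2
            = -(u.2 - v.2) := by simp only []; ring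
        rw [e2, e3, abs_neg, abs_neg] at key
        exact key
      have hlipr₂ : ∀ u ∈ K, ∀ v ∈ K,
          |H₂r u - H₂r v| ≤ L * (|u.1 - v.1| + |u.2 - v.2|) := by
        intro u hu v hv
        have key := hlip₂ _ (hreflK u hu) _ (hreflK v hv)
        have e1 : H₂r u - H₂r v
            = -(H₂ (1 - u.1, 1 - u.2) - H₂ (1 - v.1, 1 - v.2)) := by
          show -(b₂ (0,1)) - H₂ (1 - u.1, 1 - u.2) - (-(b₂ (0,1)) - H₂ (1 - v.1, 1 - v.2)) = _
          ring
        rw [e1, abs_neg]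
        have e2 : ((1:ℝ) - u.1, (1:ℝ) - u.2).1 - ((1:ℝ) - v.1, (1:ℝ) - v.2).1
            = -(u.1 - v.1) := by simp only []; ring
        have e3 : ((1:ℝ) - u.1, (1:ℝ) - u.2).2 - ((1:ℝ) - v.1, (1:ℝ) - v.2).2
            = -(u.2 - v.2) := by simp only []; ring
        rw [e2, e3, abs_neg, abs_neg] at key
        exact key
      have hcontr₁ : ContinuousOn (fun t => P₁r (Gr t)) (Ici (0:ℝ)) := by
        apply ContinuousOn.congr hcont₁.neg
        intro t ht
        exact hP₁rG t
      have hcontr₂ : ContinuousOn (fun t => P₂r (Gr t)) (Ici (0:ℝ)) := by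
        apply ContinuousOn.congr hcont₂.neg
        intro t ht
        exact hP₂rG t
      have hstart₁ : 0 ≤ P₁r (Gr t₀) := by rw [hP₁rG t₀]; linarith
      have hstart₂ : 0 ≤ P₂r (Gr t₀) := by rw [hP₂rG t₀]; linarith
      have hs := invariance_pos Gr P₁r P₂r H₁r H₂r (b₁ (1,0)) (b₂ (0,1)) L t₀
        hL hbe₁ hbe₂ ht₀ hGrmem hdr₁ hdr₂ hdecompr₁ hdecompr₂ hmonor₁ hmonor₂
        hlipr₁ hlipr₂ hcontr₁ hcontr₂ hstart₁ hstart₂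
      refine ⟨t₀, ht₀, Or.inr ?_, Or.inr ?_⟩
      · intro t ht
        have := (hs t (le_of_lt ht)).1
        rw [hP₁rG t] at this
        linarith
      · intro t ht
        have := (hs t (le_of_lt ht)).2
        rw [hP₂rG t] at this
        linarith
    · -- derivatives never vanish : constant sign
      push_neg at hA hB
      have hne : ∀ t, 0 ≤ t → P₁ (G t) ≠ 0 := by
        intro t ht h0
        have h1 := hA t ht (le_of_eq h0.symm)
        have h2 := hB t ht (le_of_eq h0)
        linarith
      have hdich : (∀ t, 0 ≤ t → 0 < P₁ (G t)) ∨ (∀ t, 0 ≤ t → P₁ (G t) < 0) := by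
        by_cases h0 : 0 < P₁ (G 0)
        · left
          intro t ht
          by_contra hc
          push_neg at hc
          have hlt : P₁ (G t) < 0 := lt_of_le_of_ne hc (hne t ht)
          obtain ⟨s, hsmem, hseq⟩ :=
            intermediate_value_Icc' ht (hcont₁.mono (fun r hr => hr.1))
              (Set.mem_Icc.mpr ⟨hlt.le, h0.le⟩)
          exact hne s hsmem.1 hseq
        · right
          have h0' : P₁ (G 0) < 0 := lt_of_le_of_ne (not_lt.mp h0) (hne 0 le_rfl)
          intro t ht
          by_contra hc
          push_neg at hc
          have hgt : 0 < P₁ (G t) := lt_of_le_of_ne hc (Ne.symm (hne t ht))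
          obtain ⟨s, hsmem, hseq⟩ :=
            intermediate_value_Icc ht (hcont₁.mono (fun r hr => hr.1))
              (Set.mem_Icc.mpr ⟨h0'.le, hgt.le⟩)
          exact hne s hsmem.1 hseq
      rcases hdich with hpos | hneg
      · exact ⟨0, le_rfl, Or.inl (fun t ht => (hpos t (le_of_lt ht)).le),
          Or.inr (fun t ht => (hA t (le_of_lt ht) (hpos t (le_of_lt ht)).le).le)⟩
      · exact ⟨0, le_rfl, Or.inr (fun t ht => (hneg t (le_of_lt ht)).le),
          Or.inl (fun t ht => (hB t (le_of_lt ht) (hneg t (le_of_lt ht)).le).le)⟩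
  -- limits of the coordinates
  obtain ⟨T₀, hT₀, hsgn₁, hsgn₂⟩ := key
  obtain ⟨p₁, hp₁mem, hp₁⟩ := exists_lim_of_sign hd₁ hbox₁ hT₀ hsgn₁
  obtain ⟨p₂, hp₂mem, hp₂⟩ := exists_lim_of_sign hd₂ hbox₂ hT₀ hsgn₂
  have hpG : Filter.Tendsto G Filter.atTop (nhds ((p₁, p₂) : ℝ × ℝ)) :=
    hp₁.prodMk_nhds hp₂
  have hpmem : ((p₁, p₂) : ℝ × ℝ) ∈ K := by
    rw [mem_K_iff]
    exact ⟨⟨hp₁mem.1, hp₁mem.2⟩, ⟨hp₂mem.1, hp₂mem.2⟩⟩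
  have hGK' : Filter.Tendsto G Filter.atTop (nhdsWithin ((p₁, p₂) : ℝ × ℝ) K) := by
    rw [tendsto_nhdsWithin_iff]
    exact ⟨hpG, by filter_upwards [eventually_ge_atTop (0:ℝ)] with t ht using hGmem t ht⟩
  have hf₁lim : Filter.Tendsto (fun t => P₁ (G t)) Filter.atTop (nhds (P₁ (p₁, p₂))) := by
    have hH : Filter.Tendsto (fun t => H₁ (G t)) Filter.atTop (nhds (H₁ (p₁, p₂))) :=
      ((hHc₁ _ hpmem).tendsto).comp hGK'
    have hlin : Filter.Tendsto (fun t => b₁ (1,0) * (G t).1 + H₁ (G t)) Filter.atTop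
        (nhds (b₁ (1,0) * p₁ + H₁ (p₁, p₂))) := (tendsto_const_nhds.mul hp₁).add hH
    have h2 : Filter.Tendsto (fun t => P₁ (G t)) Filter.atTop
        (nhds (b₁ (1,0) * p₁ + H₁ (p₁, p₂))) := by
      apply hlin.congr'
      filter_upwards [eventually_ge_atTop (0:ℝ)] with t ht
      exact (hdecomp₁ (G t) (hGmem t ht)).symm
    have h3 : P₁ ((p₁, p₂) : ℝ × ℝ) = b₁ (1,0) * p₁ + H₁ (p₁, p₂) := hdecomp₁ _ hpmem
    rw [h3]
    exact h2
  have hf₂lim : Filter.Tendsto (fun t => P₂ (G t)) Filter.atTop (nhds (P₂ (p₁, p₂))) := by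
    have hH : Filter.Tendsto (fun t => H₂ (G t)) Filter.atTop (nhds (H₂ (p₁, p₂))) :=
      ((hHc₂ _ hpmem).tendsto).comp hGK'
    have hlin : Filter.Tendsto (fun t => b₂ (0,1) * (G t).2 + H₂ (G t)) Filter.atTop
        (nhds (b₂ (0,1) * p₂ + H₂ (p₁, p₂))) := (tendsto_const_nhds.mul hp₂).add hH
    have h2 : Filter.Tendsto (fun t => P₂ (G t)) Filter.atTop
        (nhds (b₂ (0,1) * p₂ + H₂ (p₁, p₂))) := by
      apply hlin.congr'
      filter_upwards [eventually_ge_atTop (0:ℝ)] with t ht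
      exact (hdecomp₂ (G t) (hGmem t ht)).symm
    have h3 : P₂ ((p₁, p₂) : ℝ × ℝ) = b₂ (0,1) * p₂ + H₂ (p₁, p₂) := hdecomp₂ _ hpmem
    rw [h3]
    exact h2
  have hroot₁ : P₁ ((p₁, p₂) : ℝ × ℝ) = 0 := deriv_limit_zero hd₁ hbox₁ hf₁lim
  have hroot₂ : P₂ ((p₁, p₂) : ℝ × ℝ) = 0 := deriv_limit_zero hd₂ hbox₂ hf₂lim
  have heq : ((p₁, p₂) : ℝ × ℝ) = q := hquniq (p₁, p₂) hpmem hroot₁ hroot₂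
  rw [← heq]
  exact hpG
end

section
/- Write f₁(u) = B₁(u,y) + B̄₁(u) and f₂(u) = B₂(u,z) + B̄₂(u), and let G(t) be the solution of the initial value problem u' = (f₁(u), f₂(u)), u(0) = x, with values in [0,1]². If f₁(x) ≥ 0 and f₂(x) ≥ 0, then f₁(G(t)) ≥ 0 and f₂(G(t)) ≥ 0 for all t ≥ 0; consequently both components of G(t) are nondecreasing in t, and lim_{t→∞} G(t) = q(y,z), the unique root in [0,1]² of the system f₁ = f₂ = 0. -/
open scoped BigOperators

/-- monomial -/
noncomputable def monXY (x : ℝ × ℝ) (j : ℕ × ℕ) : ℝ := x.1 ^ j.1 * x.2 ^ j.2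

lemma mem_sq {x : ℝ × ℝ} (hx : x ∈ Set.Icc ((0:ℝ),(0:ℝ)) (1,1)) :
    0 ≤ x.1 ∧ x.1 ≤ 1 ∧ 0 ≤ x.2 ∧ x.2 ≤ 1 := by
  obtain ⟨⟨h1,h2⟩,⟨h3,h4⟩⟩ := hx
  exact ⟨h1, h3, h2, h4⟩

lemma mon_mem {x : ℝ × ℝ} (hx : x ∈ Set.Icc ((0:ℝ),(0:ℝ)) (1,1)) (j : ℕ × ℕ) :
    0 ≤ monXY x j ∧ monXY x j ≤ 1 := by
  obtain ⟨h1, h2, h3, h4⟩ := mem_sq hx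
  constructor
  · exact mul_nonneg (pow_nonneg h1 _) (pow_nonneg h3 _)
  · have := mul_le_mul (pow_le_one₀ h1 h2 (n := j.1)) (pow_le_one₀ h3 h4 (n := j.2)) (pow_nonneg h3 _) zero_le_one
    simpa [monXY] using this

lemma pow_diff_le {a b : ℝ} (ha : 0 ≤ a) (hab : a ≤ b) (hb : b ≤ 1) :
    ∀ n : ℕ, b ^ n - a ^ n ≤ n * (b - a) := by
  intro n
  induction n with
  | zero => simp
  | succ n ih =>
    have h1 : a ^ n ≤ b ^ n := pow_le_pow_left₀ ha hab n
    have h2 : a ^ n ≤ 1 := pow_le_one₀ ha (hab.trans hb)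
    have h3 : 0 ≤ a ^ n := pow_nonneg ha n
    have e1 : b ^ (n+1) - a ^ (n+1) = b * (b ^ n - a ^ n) + (b - a) * a ^ n := by ring
    push_cast
    nlinarith [pow_nonneg (ha.trans hab) n]

lemma pow_lb {a a' : ℝ} (ha : 0 ≤ a) (ha1 : a ≤ 1) (ha' : 0 ≤ a') (ha1' : a' ≤ 1) (n : ℕ) :
    a' ^ n - n * max (a' - a) 0 ≤ a ^ n := by
  rcases le_total a' a with h | h
  · have := pow_le_pow_left₀ ha' h n
    have : (0:ℝ) ≤ n * max (a' - a) 0 :=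
      mul_nonneg (Nat.cast_nonneg n) (le_max_right _ _)
    nlinarith [pow_le_pow_left₀ ha' h n]
  · have hm : max (a' - a) 0 = a' - a := max_eq_left (by linarith)
    rw [hm]
    have := pow_diff_le ha h ha1' n
    linarith

lemma mon_lb {x x' : ℝ × ℝ} (hx : x ∈ Set.Icc ((0:ℝ),(0:ℝ)) (1,1))
    (hx' : x' ∈ Set.Icc ((0:ℝ),(0:ℝ)) (1,1)) (j : ℕ × ℕ) :
    monXY x' j - j.1 * max (x'.1 - x.1) 0 - j.2 * max (x'.2 - x.2) 0 ≤ monXY x j := by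
  obtain ⟨h1, h2, h3, h4⟩ := mem_sq hx
  obtain ⟨h1', h2', h3', h4'⟩ := mem_sq hx'
  have A : x'.1 ^ j.1 - j.1 * max (x'.1 - x.1) 0 ≤ x.1 ^ j.1 := pow_lb h1 h2 h1' h2' j.1
  have B : x'.2 ^ j.2 - j.2 * max (x'.2 - x.2) 0 ≤ x.2 ^ j.2 := pow_lb h3 h4 h3' h4' j.2
  have p1 : 0 ≤ x.1 ^ j.1 := pow_nonneg h1 _
  have p1' : x.1 ^ j.1 ≤ 1 := pow_le_one₀ h1 h2
  have p2' : 0 ≤ x'.2 ^ j.2 := pow_nonneg h3' _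
  have p2'' : x'.2 ^ j.2 ≤ 1 := pow_le_one₀ h3' h4'
  have p3 : 0 ≤ x.2 ^ j.2 := pow_nonneg h3 _
  have q1 : 0 ≤ (j.1:ℝ) * max (x'.1 - x.1) 0 :=
    mul_nonneg (Nat.cast_nonneg _) (le_max_right _ _)
  have q2 : 0 ≤ (j.2:ℝ) * max (x'.2 - x.2) 0 :=
    mul_nonneg (Nat.cast_nonneg _) (le_max_right _ _)
  have key : monXY x' j - monXY x j
      = (x'.1 ^ j.1 - x.1 ^ j.1) * x'.2 ^ j.2 + x.1 ^ j.1 * (x'.2 ^ j.2 - x.2 ^ j.2) := by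
    simp only [monXY]; ring
  nlinarith [mul_le_mul_of_nonneg_right (sub_le_iff_le_add.mpr (by linarith : x'.1 ^ j.1 ≤ x.1 ^ j.1 + j.1 * max (x'.1 - x.1) 0)) p2']

noncomputable def Fgen (c : ℕ × ℕ → ℝ) (x : ℝ × ℝ) : ℝ := ∑' j, c j * monXY x j

lemma summable_ite_of {f : ℕ × ℕ → ℝ} (e : ℕ × ℕ) (hS : Summable f) :
    Summable fun j => if j = e then 0 else f j := by
  have h : (fun j => if j = e then 0 else f j)
      = fun j => f j - (if j = e then f j else 0) := by
    funext j; by_cases h : j = e <;> simp [h]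
  rw [h]
  exact hS.sub (summable_of_ne_finset_zero (s := {e}) (by intro b hb; simp at hb; simp [hb]))

lemma summable_of_ite {f : ℕ × ℕ → ℝ} (e : ℕ × ℕ)
    (hS : Summable fun j => if j = e then 0 else f j) : Summable f := by
  have h : f = fun j => (if j = e then 0 else f j) + (if j = e then f j else 0) := by
    funext j; by_cases h : j = e <;> simp [h]
  rw [h]
  exact hS.add (summable_of_ne_finset_zero (s := {e}) (by intro b hb; simp at hb; simp [hb]))

lemma summable_termF {c : ℕ × ℕ → ℝ} (hS : Summable c) {x : ℝ × ℝ}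
    (hx : x ∈ Set.Icc ((0:ℝ),(0:ℝ)) (1,1)) : Summable fun j => c j * monXY x j := by
  apply Summable.of_abs
  apply Summable.of_nonneg_of_le (fun j => abs_nonneg _) _ hS.abs
  intro j
  rw [abs_mul]
  have h := mon_mem hx j
  calc |c j| * |monXY x j| ≤ |c j| * 1 := by
        apply mul_le_mul_of_nonneg_left _ (abs_nonneg _)
        rw [abs_of_nonneg h.1]; exact h.2
    _ = |c j| := mul_one _

lemma Fgen_contOn {c : ℕ × ℕ → ℝ} (hS : Summable c) :
    ContinuousOn (Fgen c) (Set.Icc ((0:ℝ),(0:ℝ)) (1,1)) := by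
  apply continuousOn_tsum (u := fun j => |c j|)
  · intro j
    exact ((continuous_const.mul ((continuous_fst.pow _).mul (continuous_snd.pow _)))).continuousOn
  · exact hS.abs
  · intro j x hx
    have h := mon_mem hx j
    rw [Real.norm_eq_abs, abs_mul]
    calc |c j| * |monXY x j| ≤ |c j| * 1 := by
          apply mul_le_mul_of_nonneg_left _ (abs_nonneg _)
          rw [abs_of_nonneg h.1]; exact h.2
      _ = |c j| := mul_one _

lemma Fgen_key {c : ℕ × ℕ → ℝ} (e : ℕ × ℕ)
    (hc : ∀ j, j ≠ e → 0 ≤ c j) (hS : Summable c)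
    (h1 : Summable fun j => if j = e then 0 else c j * j.1)
    (h2 : Summable fun j => if j = e then 0 else c j * j.2)
    {x x' : ℝ × ℝ} (hx : x ∈ Set.Icc ((0:ℝ),(0:ℝ)) (1,1))
    (hx' : x' ∈ Set.Icc ((0:ℝ),(0:ℝ)) (1,1)) :
    Fgen c x' + c e * (monXY x e - monXY x' e)
      - (∑' j : ℕ × ℕ, if j = e then 0 else c j * j.1) * max (x'.1 - x.1) 0
      - (∑' j : ℕ × ℕ, if j = e then 0 else c j * j.2) * max (x'.2 - x.2) 0 ≤ Fgen c x := by
  set D1 := max (x'.1 - x.1) 0 with hD1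
  set D2 := max (x'.2 - x.2) 0 with hD2
  have hD1n : 0 ≤ D1 := le_max_right _ _
  have hD2n : 0 ≤ D2 := le_max_right _ _
  have hsx : Summable (fun j => c j * monXY x j) := summable_termF hS hx
  have hsx' : Summable (fun j => c j * monXY x' j) := summable_termF hS hx'
  have s1 : Summable (fun j => if j = e then 0 else c j * monXY x j) := summable_ite_of e hsx
  have s1' : Summable (fun j => if j = e then 0 else c j * monXY x' j) := summable_ite_of e hsx'
  have hEx := Summable.tsum_eq_add_tsum_ite hsx e
  have hEx' := Summable.tsum_eq_add_tsum_ite hsx' e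
  have hTle : (∑' j : ℕ × ℕ, ((if j = e then 0 else c j * monXY x' j)
        - (if j = e then 0 else c j * (j.1:ℝ)) * D1
        - (if j = e then 0 else c j * (j.2:ℝ)) * D2))
      ≤ ∑' j : ℕ × ℕ, (if j = e then 0 else c j * monXY x j) := by
    apply Summable.tsum_le_tsum _ ((s1'.sub (h1.mul_right D1)).sub (h2.mul_right D2)) s1
    intro j
    by_cases h : j = e
    · simp [h]
    · simp only [if_neg h]
      have hcj : 0 ≤ c j := hc j h
      have := mon_lb hx hx' j
      nlinarith [mul_le_mul_of_nonneg_left this hcj]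
  have hTsplit : (∑' j : ℕ × ℕ, ((if j = e then 0 else c j * monXY x' j)
        - (if j = e then 0 else c j * (j.1:ℝ)) * D1
        - (if j = e then 0 else c j * (j.2:ℝ)) * D2))
      = (∑' j : ℕ × ℕ, (if j = e then 0 else c j * monXY x' j))
        - (∑' j : ℕ × ℕ, if j = e then 0 else c j * (j.1:ℝ)) * D1
        - (∑' j : ℕ × ℕ, if j = e then 0 else c j * (j.2:ℝ)) * D2 := by
    rw [Summable.tsum_sub (s1'.sub (h1.mul_right D1)) (h2.mul_right D2),
        Summable.tsum_sub s1' (h1.mul_right D1), tsum_mul_right, tsum_mul_right]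
  have hFx : Fgen c x = c e * monXY x e + ∑' j : ℕ × ℕ, (if j = e then 0 else c j * monXY x j) := hEx
  have hFx' : Fgen c x' = c e * monXY x' e + ∑' j : ℕ × ℕ, (if j = e then 0 else c j * monXY x' j) := hEx'
  rw [hFx, hFx']
  rw [hTsplit] at hTle
  linarith

lemma summable_ite_finset {f : ℕ × ℕ → ℝ} (R : Finset (ℕ × ℕ)) (hS : Summable f) :
    Summable fun j => if j ∈ R then 0 else f j := by
  have h : (fun j => if j ∈ R then 0 else f j)
      = fun j => f j - (if j ∈ R then f j else 0) := by
    funext j; by_cases h : j ∈ R <;> simp [h]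
  rw [h]
  exact hS.sub (summable_of_ne_finset_zero (s := R) (by intro b hb; simp [hb]))


lemma decompF {b : ℕ × ℕ → ℝ} {R : Finset (ℕ × ℕ)} {e : ℕ × ℕ}
    (hS : Summable fun j => if j = e then 0 else b j)
    (w : {j // j ∈ R} → ℝ) {x : ℝ × ℝ} (hx : x ∈ Set.Icc ((0:ℝ),(0:ℝ)) (1,1)) :
    Bpart b R x w + Bbar b R x
      = Fgen (fun j => if h : j ∈ R then b j * w ⟨j, h⟩ else b j) x := by
  set w' : ℕ × ℕ → ℝ := fun j => if h : j ∈ R then w ⟨j, h⟩ else 0 with hw'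
  have hSb : Summable b := summable_of_ite e hS
  have hA : Summable (fun j => b j * monXY x j * w' j) := by
    apply summable_of_ne_finset_zero (s := R)
    intro j hj
    simp [hw', hj]
  have hB : Summable (fun j => if j ∈ R then 0 else b j * monXY x j) :=
    summable_ite_finset R (summable_termF hSb hx)
  have hBp : Bpart b R x w = ∑' j : ℕ × ℕ, b j * monXY x j * w' j := by
    rw [tsum_eq_sum (s := R) (by intro j hj; simp [hw', hj])]
    rw [Bpart, Finset.univ_eq_attach, ← Finset.sum_attach R (fun j => b j * monXY x j * w' j)]
    apply Finset.sum_congr rfl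
    intro j _
    have : w' j.1 = w j := by simp [hw', j.2]
    rw [this, monXY]; ring
  have hBb : Bbar b R x = ∑' j : ℕ × ℕ, if j ∈ R then 0 else b j * monXY x j := by
    rw [Bbar]
    apply tsum_congr
    intro j
    by_cases h : j ∈ R <;> simp [h, monXY, mul_assoc]
  rw [hBp, hBb, Fgen, ← Summable.tsum_add hA hB]
  apply tsum_congr
  intro j
  by_cases h : j ∈ R
  · simp only [hw', dif_pos h, if_pos h]
    ring
  · simp only [hw', dif_neg h, if_neg h]
    ring

lemma ftc_Ici {g u : ℝ → ℝ}
    (hg : ∀ t ∈ Set.Ici (0:ℝ), HasDerivWithinAt g (u t) (Set.Ici 0) t)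
    (hu : ContinuousOn u (Set.Ici 0)) {s t : ℝ} (hs : 0 ≤ s) (hst : s ≤ t) :
    ∫ r in s..t, u r = g t - g s := by
  have hsub : Set.Icc s t ⊆ Set.Ici (0:ℝ) := fun r hr => hs.trans hr.1
  apply intervalIntegral.integral_eq_sub_of_hasDeriv_right_of_le hst
  · intro r hr
    exact ((hg r (hsub hr)).continuousWithinAt).mono hsub
  · intro r hr
    have hr0 : 0 < r := lt_of_le_of_lt hs hr.1
    have := (hg r (le_of_lt hr0)).hasDerivAt (Ici_mem_nhds hr0)
    exact this.hasDerivWithinAt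
  · exact (hu.mono hsub).intervalIntegrable_of_Icc hst

lemma gronwall_zero {n : ℝ → ℝ} {K : ℝ} (hK : 0 ≤ K)
    (hcont : ContinuousOn n (Set.Ici 0)) (hnn : ∀ t ∈ Set.Ici (0:ℝ), 0 ≤ n t)
    (hineq : ∀ t ∈ Set.Ici (0:ℝ), n t ≤ K * ∫ s in (0:ℝ)..t, n s) :
    ∀ t ∈ Set.Ici (0:ℝ), n t = 0 := by
  set m : ℝ → ℝ := fun t => n (max t 0) with hm
  have hmc : Continuous m :=
    hcont.comp_continuous (continuous_id.max continuous_const) (fun t => Set.mem_Ici.mpr (le_max_right _ _))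
  have hmeq : ∀ t : ℝ, 0 ≤ t → m t = n t := fun t ht => by simp [hm, max_eq_left ht]
  have hmn : ∀ t, 0 ≤ m t := fun t => hnn _ (Set.mem_Ici.mpr (le_max_right _ _))
  set N : ℝ → ℝ := fun t => ∫ s in (0:ℝ)..t, m s with hN
  have hNd : ∀ t : ℝ, HasDerivAt N (m t) t := by
    intro t
    exact intervalIntegral.integral_hasDerivAt_right (hmc.intervalIntegrable _ _)
      (hmc.stronglyMeasurableAtFilter _ _) hmc.continuousAt
  have hNint : ∀ t : ℝ, 0 ≤ t → N t = ∫ s in (0:ℝ)..t, n s := by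
    intro t ht
    apply intervalIntegral.integral_congr
    intro s hsmem
    rw [Set.uIcc_of_le ht] at hsmem
    exact hmeq s hsmem.1
  have hNnn : ∀ t : ℝ, 0 ≤ t → 0 ≤ N t := by
    intro t ht
    exact intervalIntegral.integral_nonneg ht (fun s _ => hmn s)
  set h : ℝ → ℝ := fun t => N t * Real.exp (-K * t) with hh
  have hhd : ∀ t : ℝ, HasDerivAt h ((m t - K * N t) * Real.exp (-K * t)) t := by
    intro t
    have h1 : HasDerivAt (fun t : ℝ => Real.exp (-K * t)) (-K * Real.exp (-K * t)) t := by
      have := ((hasDerivAt_id t).const_mul (-K)).exp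
      simp only [id] at this
      convert this using 1
      ring
    have : HasDerivAt (fun y => N y * Real.exp (-K * y))
        (m t * Real.exp (-K * t) + N t * (-K * Real.exp (-K * t))) t := (hNd t).mul h1
    convert this using 1
    ring
  have hanti : AntitoneOn h (Set.Ici 0) := by
    apply antitoneOn_of_deriv_nonpos (convex_Ici 0)
    · have hNdiff : Differentiable ℝ N := fun t => (hNd t).differentiableAt
      exact (hNdiff.continuous.mul
        (Real.continuous_exp.comp (continuous_const.mul continuous_id))).continuousOn
    · intro t ht
      exact ((hhd t).differentiableAt).differentiableWithinAt
    · intro t ht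
      rw [interior_Ici] at ht
      rw [(hhd t).deriv]
      have ht0 : (0:ℝ) ≤ t := le_of_lt ht
      have : m t ≤ K * N t := by
        rw [hmeq t ht0, hNint t ht0]
        exact hineq t ht0
      have he : 0 < Real.exp (-K * t) := Real.exp_pos _
      nlinarith
  intro t ht
  have h0 : h 0 = 0 := by simp [hh, hN]
  have hle : h t ≤ 0 := by
    rw [← h0]
    exact hanti (Set.self_mem_Ici) ht ht
  have hNt : N t ≤ 0 := by
    have he : 0 < Real.exp (-K * t) := Real.exp_pos _
    by_contra hcon
    push_neg at hcon
    have : 0 < h t := mul_pos hcon he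
    linarith
  have hN0 : N t = 0 := le_antisymm hNt (hNnn t ht)
  have := hineq t ht
  rw [← hNint t ht, hN0] at this
  have := hnn t ht
  linarith

lemma aux_key {c : ℕ × ℕ → ℝ} {e : ℕ × ℕ}
    (hc : ∀ j, j ≠ e → 0 ≤ c j) (hce : c e ≤ 0) (hS : Summable c)
    (h1 : Summable fun j => if j = e then 0 else c j * j.1)
    (h2 : Summable fun j => if j = e then 0 else c j * j.2)
    {G : ℝ → ℝ × ℝ} (hGmem : ∀ t ∈ Set.Ici (0:ℝ), G t ∈ Set.Icc ((0:ℝ),(0:ℝ)) (1,1))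
    {u v w : ℝ → ℝ}
    (huv : ∀ t, u t = Fgen c (G t))
    (hu0 : 0 ≤ u 0)
    (hucont : ContinuousOn u (Set.Ici 0))
    (hvcont : ContinuousOn v (Set.Ici 0)) (hwcont : ContinuousOn w (Set.Ici 0))
    (hI1 : ∀ s t : ℝ, 0 ≤ s → s ≤ t → ∫ r in s..t, v r = (G t).1 - (G s).1)
    (hI2 : ∀ s t : ℝ, 0 ≤ s → s ≤ t → ∫ r in s..t, w r = (G t).2 - (G s).2)
    (hue : ∀ s t : ℝ, 0 ≤ s → s ≤ t → monXY (G t) e - monXY (G s) e = ∫ r in s..t, u r)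
    {t : ℝ} (ht : 0 ≤ t) :
    max (-(u t)) 0 ≤ ((∑' j : ℕ × ℕ, if j = e then 0 else c j * j.1)
      + (∑' j : ℕ × ℕ, if j = e then 0 else c j * j.2))
      * ∫ r in (0:ℝ)..t, (max (-(v r)) 0 + max (-(w r)) 0) := by
  classical
  set C1 := ∑' j : ℕ × ℕ, if j = e then 0 else c j * (j.1:ℝ) with hC1
  set C2 := ∑' j : ℕ × ℕ, if j = e then 0 else c j * (j.2:ℝ) with hC2
  have hC1n : 0 ≤ C1 := tsum_nonneg (fun j => by
    by_cases h : j = e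
    · simp [h]
    · simp only [if_neg h]; exact mul_nonneg (hc j h) (Nat.cast_nonneg _))
  have hC2n : 0 ≤ C2 := tsum_nonneg (fun j => by
    by_cases h : j = e
    · simp [h]
    · simp only [if_neg h]; exact mul_nonneg (hc j h) (Nat.cast_nonneg _))
  set nn : ℝ → ℝ := fun r => max (-(v r)) 0 + max (-(w r)) 0 with hnn
  have hnncont : ContinuousOn nn (Set.Ici 0) := fun x hx =>
    (((hvcont x hx).neg.max continuousWithinAt_const)).add
      (((hwcont x hx).neg.max continuousWithinAt_const))
  have hnn0 : ∀ r, 0 ≤ nn r := fun r =>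
    add_nonneg (le_max_right _ _) (le_max_right _ _)
  set I := ∫ r in (0:ℝ)..t, nn r with hI
  have hInn : 0 ≤ I := intervalIntegral.integral_nonneg ht (fun r _ => hnn0 r)
  -- last time u is nonnegative
  set m : ℝ → ℝ := fun s => u (max s 0) with hm
  have hmc : Continuous m :=
    hucont.comp_continuous (continuous_id.max continuous_const) (fun s => Set.mem_Ici.mpr (le_max_right _ _))
  set S := Set.Icc 0 t ∩ {s : ℝ | 0 ≤ m s} with hSdef
  have hS0 : (0:ℝ) ∈ S := by
    refine ⟨⟨le_refl _, ht⟩, ?_⟩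
    simp only [Set.mem_setOf_eq, hm, max_self]
    exact hu0
  have hScl : IsClosed S := isClosed_Icc.inter (isClosed_le continuous_const hmc)
  have hSbdd : BddAbove S := ⟨t, fun s hs => hs.1.2⟩
  set σ := sSup S with hσ
  have hσS : σ ∈ S := hScl.csSup_mem ⟨0, hS0⟩ hSbdd
  have hσ0 : 0 ≤ σ := hσS.1.1
  have hσt : σ ≤ t := hσS.1.2
  have huσ : 0 ≤ u σ := by
    have := hσS.2
    simpa [hm, max_eq_left hσ0] using this
  have hneg : ∀ r, σ < r → r ≤ t → u r ≤ 0 := by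
    intro r h1' h2'
    by_contra hcon
    push_neg at hcon
    have hr0 : 0 ≤ r := hσ0.trans h1'.le
    have hrS : r ∈ S := ⟨⟨hr0, h2'⟩, by
      simp only [Set.mem_setOf_eq, hm, max_eq_left hr0]; exact hcon.le⟩
    exact absurd (le_csSup hSbdd hrS) (not_le.mpr h1')
  have hIccIci : Set.Icc σ t ⊆ Set.Ici (0:ℝ) := fun r hr => hσ0.trans hr.1
  have hIcc0t : Set.Icc (0:ℝ) t ⊆ Set.Ici (0:ℝ) := fun r hr => hr.1
  have hIcc0σ : Set.Icc (0:ℝ) σ ⊆ Set.Ici (0:ℝ) := fun r hr => hr.1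
  have hIneg : ∫ r in σ..t, u r ≤ 0 := by
    rw [intervalIntegral.integral_of_le hσt]
    apply MeasureTheory.setIntegral_nonpos measurableSet_Ioc
    intro r hr
    exact hneg r hr.1 hr.2
  -- bounds on backwards motion
  have hvint : IntervalIntegrable v MeasureTheory.volume σ t :=
    (hvcont.mono hIccIci).intervalIntegrable_of_Icc hσt
  have hwint : IntervalIntegrable w MeasureTheory.volume σ t :=
    (hwcont.mono hIccIci).intervalIntegrable_of_Icc hσt
  have hnnintσt : IntervalIntegrable nn MeasureTheory.volume σ t :=
    (hnncont.mono hIccIci).intervalIntegrable_of_Icc hσt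
  have hnnint0σ : IntervalIntegrable nn MeasureTheory.volume 0 σ :=
    (hnncont.mono hIcc0σ).intervalIntegrable_of_Icc hσ0
  have hsplit : ∫ r in σ..t, nn r ≤ I := by
    have hadd := intervalIntegral.integral_add_adjacent_intervals hnnint0σ hnnintσt
    have h0σ : 0 ≤ ∫ r in (0:ℝ)..σ, nn r :=
      intervalIntegral.integral_nonneg hσ0 (fun r _ => hnn0 r)
    rw [hI]; linarith
  have hb1 : max ((G σ).1 - (G t).1) 0 ≤ I := by
    have e1 : (G σ).1 - (G t).1 = ∫ r in σ..t, -(v r) := by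
      rw [intervalIntegral.integral_neg, hI1 σ t hσ0 hσt]; ring
    have hle : ∫ r in σ..t, -(v r) ≤ ∫ r in σ..t, nn r := by
      apply intervalIntegral.integral_mono_on hσt hvint.neg hnnintσt
      intro r _
      have h1' := le_max_left (-(v r)) (0:ℝ)
      have h2' := le_max_right (-(w r)) (0:ℝ)
      simp only [hnn, Pi.neg_apply]; linarith
    apply max_le _ hInn
    rw [e1]; linarith
  have hb2 : max ((G σ).2 - (G t).2) 0 ≤ I := by
    have e1 : (G σ).2 - (G t).2 = ∫ r in σ..t, -(w r) := by
      rw [intervalIntegral.integral_neg, hI2 σ t hσ0 hσt]; ring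
    have hle : ∫ r in σ..t, -(w r) ≤ ∫ r in σ..t, nn r := by
      apply intervalIntegral.integral_mono_on hσt hwint.neg hnnintσt
      intro r _
      have h1' := le_max_left (-(w r)) (0:ℝ)
      have h2' := le_max_right (-(v r)) (0:ℝ)
      simp only [hnn, Pi.neg_apply]; linarith
    apply max_le _ hInn
    rw [e1]; linarith
  have hown : 0 ≤ c e * (monXY (G t) e - monXY (G σ) e) := by
    rw [hue σ t hσ0 hσt]
    have := mul_nonneg (neg_nonneg.2 hce) (neg_nonneg.2 hIneg)
    nlinarith
  have hkey := Fgen_key e hc hS h1 h2 (hGmem t ht) (hGmem σ hσ0)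
  rw [← huv t, ← huv σ, ← hC1, ← hC2] at hkey
  have hm1 : C1 * max ((G σ).1 - (G t).1) 0 ≤ C1 * I := mul_le_mul_of_nonneg_left hb1 hC1n
  have hm2 : C2 * max ((G σ).2 - (G t).2) 0 ≤ C2 * I := mul_le_mul_of_nonneg_left hb2 hC2n
  apply max_le
  · nlinarith
  · positivity


theorem solution_increasing_to_root (b₁ b₂ : ℕ × ℕ → ℝ)
    (hb₁ : ∀ j : ℕ × ℕ, j ≠ (1, 0) → 0 ≤ b₁ j)
    (hb₂ : ∀ j : ℕ × ℕ, j ≠ (0, 1) → 0 ≤ b₂ j)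
    (hs₁ : Summable fun j : ℕ × ℕ => if j = (1, 0) then 0 else b₁ j)
    (hs₂ : Summable fun j : ℕ × ℕ => if j = (0, 1) then 0 else b₂ j)
    (he₁ : b₁ (1, 0) = -∑' j : ℕ × ℕ, if j = (1, 0) then 0 else b₁ j)
    (he₂ : b₂ (0, 1) = -∑' j : ℕ × ℕ, if j = (0, 1) then 0 else b₂ j)
    (hA2 : (Summable fun j : ℕ × ℕ => b₁ j * (j.1 : ℝ)) ∧
      (Summable fun j : ℕ × ℕ => b₁ j * (j.2 : ℝ)) ∧
      (Summable fun j : ℕ × ℕ => b₂ j * (j.1 : ℝ)) ∧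
      (Summable fun j : ℕ × ℕ => b₂ j * (j.2 : ℝ)))
    (hA1 : ¬ ∃ M : Matrix (Fin 2) (Fin 2) ℝ, ∀ x ∈ Set.Icc ((0 : ℝ), (0 : ℝ)) (1, 1),
      genFun b₁ x = x.1 * M 0 0 + x.2 * M 1 0 ∧ genFun b₂ x = x.1 * M 0 1 + x.2 * M 1 1)
    (hA3 : ∃ m : ℕ, ∀ i j : Fin 2, 0 < ((jacMat b₁ b₂ (1, 1)) ^ m) i j)
    (R₁ R₂ : Finset (ℕ × ℕ)) (hR₁ : R₁.Nonempty) (hR₂ : R₂.Nonempty)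
    (hpos₁ : ∀ j ∈ R₁, 0 < b₁ j) (hpos₂ : ∀ j ∈ R₂, 0 < b₂ j)
    (y : {j // j ∈ R₁} → ℝ) (z : {j // j ∈ R₂} → ℝ)
    (hy : ∀ i, y i ∈ Set.Ico (0 : ℝ) 1) (hz : ∀ i, z i ∈ Set.Ico (0 : ℝ) 1)
    (x : ℝ × ℝ) (hx : x ∈ Set.Icc ((0 : ℝ), (0 : ℝ)) (1, 1))
    (q : ℝ × ℝ) (hqmem : q ∈ Set.Icc ((0 : ℝ), (0 : ℝ)) (1, 1))
    (hq₁ : Bpart b₁ R₁ q y + Bbar b₁ R₁ q = 0) (hq₂ : Bpart b₂ R₂ q z + Bbar b₂ R₂ q = 0)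
    (hquniq : ∀ x' ∈ Set.Icc ((0 : ℝ), (0 : ℝ)) (1, 1), Bpart b₁ R₁ x' y + Bbar b₁ R₁ x' = 0 →
      Bpart b₂ R₂ x' z + Bbar b₂ R₂ x' = 0 → x' = q)
    (G : ℝ → ℝ × ℝ) (hGsol : (G 0 = x) ∧
      (∀ t ∈ Set.Ici (0 : ℝ),
        HasDerivWithinAt (fun s => (G s).1)
          (Bpart b₁ R₁ (G t) y + Bbar b₁ R₁ (G t)) (Set.Ici 0) t ∧
        HasDerivWithinAt (fun s => (G s).2)
          (Bpart b₂ R₂ (G t) z + Bbar b₂ R₂ (G t)) (Set.Ici 0) t))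
    (hGmem : ∀ t ∈ Set.Ici (0 : ℝ), G t ∈ Set.Icc ((0 : ℝ), (0 : ℝ)) (1, 1))
    (hf₁x : 0 ≤ Bpart b₁ R₁ x y + Bbar b₁ R₁ x)
    (hf₂x : 0 ≤ Bpart b₂ R₂ x z + Bbar b₂ R₂ x) :
    (∀ t ∈ Set.Ici (0 : ℝ),
      0 ≤ Bpart b₁ R₁ (G t) y + Bbar b₁ R₁ (G t) ∧
      0 ≤ Bpart b₂ R₂ (G t) z + Bbar b₂ R₂ (G t)) ∧
    MonotoneOn (fun t => (G t).1) (Set.Ici 0) ∧ MonotoneOn (fun t => (G t).2) (Set.Ici 0) ∧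
    Filter.Tendsto G Filter.atTop (nhds q) := by
    classical
  obtain ⟨hA21, hA22, hA23, hA24⟩ := hA2
  obtain ⟨hG0, hGd⟩ := hGsol
  have hbe₁ : b₁ (1, 0) ≤ 0 := by
    rw [he₁, neg_nonpos]
    apply tsum_nonneg
    intro j
    by_cases h : j = ((1:ℕ), (0:ℕ))
    · simp [h]
    · simp only [if_neg h]; exact hb₁ j h
  have hbe₂ : b₂ (0, 1) ≤ 0 := by
    rw [he₂, neg_nonpos]
    apply tsum_nonneg
    intro j
    by_cases h : j = ((0:ℕ), (1:ℕ))
    · simp [h]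
    · simp only [if_neg h]; exact hb₂ j h
  have heR₁ : ((1:ℕ), (0:ℕ)) ∉ R₁ := fun h => absurd (hpos₁ _ h) (not_lt.mpr hbe₁)
  have heR₂ : ((0:ℕ), (1:ℕ)) ∉ R₂ := fun h => absurd (hpos₂ _ h) (not_lt.mpr hbe₂)
  set c₁ : ℕ × ℕ → ℝ := fun j => if h : j ∈ R₁ then b₁ j * y ⟨j, h⟩ else b₁ j with hc₁def
  set c₂ : ℕ × ℕ → ℝ := fun j => if h : j ∈ R₂ then b₂ j * z ⟨j, h⟩ else b₂ j with hc₂def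
  have hc₁e : c₁ (1, 0) = b₁ (1, 0) := dif_neg heR₁
  have hc₂e : c₂ (0, 1) = b₂ (0, 1) := dif_neg heR₂
  have hc₁nn : ∀ j, j ≠ ((1:ℕ), (0:ℕ)) → 0 ≤ c₁ j := by
    intro j hj
    simp only [hc₁def]
    split
    · rename_i h; exact mul_nonneg (hpos₁ j h).le (hy ⟨j, h⟩).1
    · exact hb₁ j hj
  have hc₂nn : ∀ j, j ≠ ((0:ℕ), (1:ℕ)) → 0 ≤ c₂ j := by
    intro j hj
    simp only [hc₂def]
    split
    · rename_i h; exact mul_nonneg (hpos₂ j h).le (hz ⟨j, h⟩).1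
    · exact hb₂ j hj
  have hc₁le : ∀ j, c₁ j ≤ b₁ j := by
    intro j
    simp only [hc₁def]
    split
    · rename_i h; exact mul_le_of_le_one_right (hpos₁ j h).le (hy ⟨j, h⟩).2.le
    · exact le_refl _
  have hc₂le : ∀ j, c₂ j ≤ b₂ j := by
    intro j
    simp only [hc₂def]
    split
    · rename_i h; exact mul_le_of_le_one_right (hpos₂ j h).le (hz ⟨j, h⟩).2.le
    · exact le_refl _
  have hS₁i : Summable (fun j => if j = ((1:ℕ), (0:ℕ)) then 0 else c₁ j) := by
    apply Summable.of_nonneg_of_le _ _ hs₁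
    · intro j
      by_cases h : j = ((1:ℕ), (0:ℕ))
      · simp [h]
      · simp only [if_neg h]; exact hc₁nn j h
    · intro j
      by_cases h : j = ((1:ℕ), (0:ℕ))
      · simp [h]
      · simp only [if_neg h]; exact hc₁le j
  have hS₂i : Summable (fun j => if j = ((0:ℕ), (1:ℕ)) then 0 else c₂ j) := by
    apply Summable.of_nonneg_of_le _ _ hs₂
    · intro j
      by_cases h : j = ((0:ℕ), (1:ℕ))
      · simp [h]
      · simp only [if_neg h]; exact hc₂nn j h
    · intro j
      by_cases h : j = ((0:ℕ), (1:ℕ))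
      · simp [h]
      · simp only [if_neg h]; exact hc₂le j
  have hSc₁ : Summable c₁ := summable_of_ite _ hS₁i
  have hSc₂ : Summable c₂ := summable_of_ite _ hS₂i
  have hm₁a : Summable (fun j : ℕ × ℕ => if j = ((1:ℕ), (0:ℕ)) then 0 else c₁ j * (j.1:ℝ)) := by
    apply Summable.of_nonneg_of_le _ _ (summable_ite_of ((1:ℕ),(0:ℕ)) hA21)
    · intro j
      by_cases h : j = ((1:ℕ), (0:ℕ))
      · simp [h]
      · simp only [if_neg h]; exact mul_nonneg (hc₁nn j h) (Nat.cast_nonneg _)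
    · intro j
      by_cases h : j = ((1:ℕ), (0:ℕ))
      · simp [h]
      · simp only [if_neg h]
        exact mul_le_mul_of_nonneg_right (hc₁le j) (Nat.cast_nonneg _)
  have hm₁b : Summable (fun j : ℕ × ℕ => if j = ((1:ℕ), (0:ℕ)) then 0 else c₁ j * (j.2:ℝ)) := by
    apply Summable.of_nonneg_of_le _ _ (summable_ite_of ((1:ℕ),(0:ℕ)) hA22)
    · intro j
      by_cases h : j = ((1:ℕ), (0:ℕ))
      · simp [h]
      · simp only [if_neg h]; exact mul_nonneg (hc₁nn j h) (Nat.cast_nonneg _)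
    · intro j
      by_cases h : j = ((1:ℕ), (0:ℕ))
      · simp [h]
      · simp only [if_neg h]
        exact mul_le_mul_of_nonneg_right (hc₁le j) (Nat.cast_nonneg _)
  have hm₂a : Summable (fun j : ℕ × ℕ => if j = ((0:ℕ), (1:ℕ)) then 0 else c₂ j * (j.1:ℝ)) := by
    apply Summable.of_nonneg_of_le _ _ (summable_ite_of ((0:ℕ),(1:ℕ)) hA23)
    · intro j
      by_cases h : j = ((0:ℕ), (1:ℕ))
      · simp [h]
      · simp only [if_neg h]; exact mul_nonneg (hc₂nn j h) (Nat.cast_nonneg _)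
    · intro j
      by_cases h : j = ((0:ℕ), (1:ℕ))
      · simp [h]
      · simp only [if_neg h]
        exact mul_le_mul_of_nonneg_right (hc₂le j) (Nat.cast_nonneg _)
  have hm₂b : Summable (fun j : ℕ × ℕ => if j = ((0:ℕ), (1:ℕ)) then 0 else c₂ j * (j.2:ℝ)) := by
    apply Summable.of_nonneg_of_le _ _ (summable_ite_of ((0:ℕ),(1:ℕ)) hA24)
    · intro j
      by_cases h : j = ((0:ℕ), (1:ℕ))
      · simp [h]
      · simp only [if_neg h]; exact mul_nonneg (hc₂nn j h) (Nat.cast_nonneg _)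
    · intro j
      by_cases h : j = ((0:ℕ), (1:ℕ))
      · simp [h]
      · simp only [if_neg h]
        exact mul_le_mul_of_nonneg_right (hc₂le j) (Nat.cast_nonneg _)
  have hid₁ : ∀ w ∈ Set.Icc ((0:ℝ), (0:ℝ)) (1, 1),
      Bpart b₁ R₁ w y + Bbar b₁ R₁ w = Fgen c₁ w := by
    intro w hw
    rw [hc₁def]
    exact decompF hs₁ y hw
  have hid₂ : ∀ w ∈ Set.Icc ((0:ℝ), (0:ℝ)) (1, 1),
      Bpart b₂ R₂ w z + Bbar b₂ R₂ w = Fgen c₂ w := by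
    intro w hw
    rw [hc₂def]
    exact decompF hs₂ z hw
  set u₁ : ℝ → ℝ := fun t => Fgen c₁ (G t) with hu₁def
  set u₂ : ℝ → ℝ := fun t => Fgen c₂ (G t) with hu₂def
  have hueq₁ : ∀ t ∈ Set.Ici (0:ℝ),
      Bpart b₁ R₁ (G t) y + Bbar b₁ R₁ (G t) = u₁ t := fun t ht => hid₁ _ (hGmem t ht)
  have hueq₂ : ∀ t ∈ Set.Ici (0:ℝ),
      Bpart b₂ R₂ (G t) z + Bbar b₂ R₂ (G t) = u₂ t := fun t ht => hid₂ _ (hGmem t ht)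
  have hGd₁ : ∀ t ∈ Set.Ici (0:ℝ),
      HasDerivWithinAt (fun s => (G s).1) (u₁ t) (Set.Ici 0) t := by
    intro t ht
    rw [← hueq₁ t ht]
    exact (hGd t ht).1
  have hGd₂ : ∀ t ∈ Set.Ici (0:ℝ),
      HasDerivWithinAt (fun s => (G s).2) (u₂ t) (Set.Ici 0) t := by
    intro t ht
    rw [← hueq₂ t ht]
    exact (hGd t ht).2
  have hGc : ContinuousOn G (Set.Ici 0) := by
    have h1 : ContinuousOn (fun t => (G t).1) (Set.Ici 0) :=
      fun t ht => (hGd₁ t ht).continuousWithinAt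
    have h2 : ContinuousOn (fun t => (G t).2) (Set.Ici 0) :=
      fun t ht => (hGd₂ t ht).continuousWithinAt
    have := h1.prodMk h2
    simpa using this
  have hu₁c : ContinuousOn u₁ (Set.Ici 0) :=
    (Fgen_contOn hSc₁).comp hGc (fun t ht => hGmem t ht)
  have hu₂c : ContinuousOn u₂ (Set.Ici 0) :=
    (Fgen_contOn hSc₂).comp hGc (fun t ht => hGmem t ht)
  have hFTC₁ : ∀ s t : ℝ, 0 ≤ s → s ≤ t → ∫ r in s..t, u₁ r = (G t).1 - (G s).1 :=
    fun s t hs hst => ftc_Ici hGd₁ hu₁c hs hst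
  have hFTC₂ : ∀ s t : ℝ, 0 ≤ s → s ≤ t → ∫ r in s..t, u₂ r = (G t).2 - (G s).2 :=
    fun s t hs hst => ftc_Ici hGd₂ hu₂c hs hst
  have hu₁0 : 0 ≤ u₁ 0 := by
    have h := hf₁x
    rw [hid₁ x hx] at h
    simpa [hu₁def, hG0] using h
  have hu₂0 : 0 ≤ u₂ 0 := by
    have h := hf₂x
    rw [hid₂ x hx] at h
    simpa [hu₂def, hG0] using h
  have hue₁ : ∀ s t : ℝ, 0 ≤ s → s ≤ t →
      monXY (G t) (1, 0) - monXY (G s) (1, 0) = ∫ r in s..t, u₁ r := by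
    intro s t hs hst
    rw [hFTC₁ s t hs hst]
    simp [monXY]
  have hue₂ : ∀ s t : ℝ, 0 ≤ s → s ≤ t →
      monXY (G t) (0, 1) - monXY (G s) (0, 1) = ∫ r in s..t, u₂ r := by
    intro s t hs hst
    rw [hFTC₂ s t hs hst]
    simp [monXY]
  have hce₁ : c₁ (1, 0) ≤ 0 := by rw [hc₁e]; exact hbe₁
  have hce₂ : c₂ (0, 1) ≤ 0 := by rw [hc₂e]; exact hbe₂
  have hkey₁ : ∀ t : ℝ, 0 ≤ t → max (-(u₁ t)) 0 ≤
      ((∑' j : ℕ × ℕ, if j = ((1:ℕ),(0:ℕ)) then 0 else c₁ j * (j.1:ℝ))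
        + (∑' j : ℕ × ℕ, if j = ((1:ℕ),(0:ℕ)) then 0 else c₁ j * (j.2:ℝ)))
      * ∫ r in (0:ℝ)..t, (max (-(u₁ r)) 0 + max (-(u₂ r)) 0) := by
    intro t ht
    exact aux_key hc₁nn hce₁ hSc₁ hm₁a hm₁b hGmem (fun t => rfl) hu₁0 hu₁c hu₁c hu₂c
      hFTC₁ hFTC₂ hue₁ ht
  have hkey₂ : ∀ t : ℝ, 0 ≤ t → max (-(u₂ t)) 0 ≤
      ((∑' j : ℕ × ℕ, if j = ((0:ℕ),(1:ℕ)) then 0 else c₂ j * (j.1:ℝ))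
        + (∑' j : ℕ × ℕ, if j = ((0:ℕ),(1:ℕ)) then 0 else c₂ j * (j.2:ℝ)))
      * ∫ r in (0:ℝ)..t, (max (-(u₁ r)) 0 + max (-(u₂ r)) 0) := by
    intro t ht
    exact aux_key hc₂nn hce₂ hSc₂ hm₂a hm₂b hGmem (fun t => rfl) hu₂0 hu₂c hu₁c hu₂c
      hFTC₁ hFTC₂ hue₂ ht
  set nn : ℝ → ℝ := fun r => max (-(u₁ r)) 0 + max (-(u₂ r)) 0 with hnndef
  have hnncont : ContinuousOn nn (Set.Ici 0) := fun r hr =>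
    (((hu₁c r hr).neg.max continuousWithinAt_const)).add
      (((hu₂c r hr).neg.max continuousWithinAt_const))
  have hnn0 : ∀ r, 0 ≤ nn r := fun r => add_nonneg (le_max_right _ _) (le_max_right _ _)
  have hKn : (0:ℝ) ≤ ((∑' j : ℕ × ℕ, if j = ((1:ℕ),(0:ℕ)) then 0 else c₁ j * (j.1:ℝ))
        + (∑' j : ℕ × ℕ, if j = ((1:ℕ),(0:ℕ)) then 0 else c₁ j * (j.2:ℝ)))
      + ((∑' j : ℕ × ℕ, if j = ((0:ℕ),(1:ℕ)) then 0 else c₂ j * (j.1:ℝ))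
        + (∑' j : ℕ × ℕ, if j = ((0:ℕ),(1:ℕ)) then 0 else c₂ j * (j.2:ℝ))) := by
    have t1 : (0:ℝ) ≤ ∑' j : ℕ × ℕ, if j = ((1:ℕ),(0:ℕ)) then 0 else c₁ j * (j.1:ℝ) :=
      tsum_nonneg (fun j => by
        by_cases h : j = ((1:ℕ),(0:ℕ))
        · simp [h]
        · simp only [if_neg h]; exact mul_nonneg (hc₁nn j h) (Nat.cast_nonneg _))
    have t2 : (0:ℝ) ≤ ∑' j : ℕ × ℕ, if j = ((1:ℕ),(0:ℕ)) then 0 else c₁ j * (j.2:ℝ) :=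
      tsum_nonneg (fun j => by
        by_cases h : j = ((1:ℕ),(0:ℕ))
        · simp [h]
        · simp only [if_neg h]; exact mul_nonneg (hc₁nn j h) (Nat.cast_nonneg _))
    have t3 : (0:ℝ) ≤ ∑' j : ℕ × ℕ, if j = ((0:ℕ),(1:ℕ)) then 0 else c₂ j * (j.1:ℝ) :=
      tsum_nonneg (fun j => by
        by_cases h : j = ((0:ℕ),(1:ℕ))
        · simp [h]
        · simp only [if_neg h]; exact mul_nonneg (hc₂nn j h) (Nat.cast_nonneg _))
    have t4 : (0:ℝ) ≤ ∑' j : ℕ × ℕ, if j = ((0:ℕ),(1:ℕ)) then 0 else c₂ j * (j.2:ℝ) :=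
      tsum_nonneg (fun j => by
        by_cases h : j = ((0:ℕ),(1:ℕ))
        · simp [h]
        · simp only [if_neg h]; exact mul_nonneg (hc₂nn j h) (Nat.cast_nonneg _))
    linarith
  have hng : ∀ t ∈ Set.Ici (0:ℝ), nn t ≤
      (((∑' j : ℕ × ℕ, if j = ((1:ℕ),(0:ℕ)) then 0 else c₁ j * (j.1:ℝ))
        + (∑' j : ℕ × ℕ, if j = ((1:ℕ),(0:ℕ)) then 0 else c₁ j * (j.2:ℝ)))
      + ((∑' j : ℕ × ℕ, if j = ((0:ℕ),(1:ℕ)) then 0 else c₂ j * (j.1:ℝ))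
        + (∑' j : ℕ × ℕ, if j = ((0:ℕ),(1:ℕ)) then 0 else c₂ j * (j.2:ℝ))))
      * ∫ r in (0:ℝ)..t, nn r := by
    intro t ht
    have h1 := hkey₁ t ht
    have h2 := hkey₂ t ht
    have := add_le_add h1 h2
    refine le_trans this (le_of_eq ?_)
    ring
  have hzero := gronwall_zero hKn hnncont (fun t _ => hnn0 t) hng
  have hu₁nn : ∀ t ∈ Set.Ici (0:ℝ), 0 ≤ u₁ t := by
    intro t ht
    have h := hzero t ht
    simp only [hnndef] at h
    have a1 := le_max_left (-(u₁ t)) (0:ℝ)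
    have a2 := le_max_right (-(u₁ t)) (0:ℝ)
    have a3 := le_max_right (-(u₂ t)) (0:ℝ)
    linarith
  have hu₂nn : ∀ t ∈ Set.Ici (0:ℝ), 0 ≤ u₂ t := by
    intro t ht
    have h := hzero t ht
    simp only [hnndef] at h
    have a1 := le_max_left (-(u₂ t)) (0:ℝ)
    have a2 := le_max_right (-(u₂ t)) (0:ℝ)
    have a3 := le_max_right (-(u₁ t)) (0:ℝ)
    linarith
  have hMon₁ : MonotoneOn (fun t => (G t).1) (Set.Ici 0) := by
    intro s hs t ht hst
    have h := hFTC₁ s t hs hst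
    have hpos : 0 ≤ ∫ r in s..t, u₁ r :=
      intervalIntegral.integral_nonneg hst (fun r hr => hu₁nn r (hs.trans hr.1))
    simp only []
    linarith
  have hMon₂ : MonotoneOn (fun t => (G t).2) (Set.Ici 0) := by
    intro s hs t ht hst
    have h := hFTC₂ s t hs hst
    have hpos : 0 ≤ ∫ r in s..t, u₂ r :=
      intervalIntegral.integral_nonneg hst (fun r hr => hu₂nn r (hs.trans hr.1))
    simp only []
    linarith
  -- convergence
  set g₁ : ℝ → ℝ := fun t => (G (max t 0)).1 with hg₁def
  set g₂ : ℝ → ℝ := fun t => (G (max t 0)).2 with hg₂def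
  have hg₁mono : Monotone g₁ := fun s t hst =>
    hMon₁ (le_max_right s 0) (le_max_right t 0) (max_le_max hst (le_refl 0))
  have hg₂mono : Monotone g₂ := fun s t hst =>
    hMon₂ (le_max_right s 0) (le_max_right t 0) (max_le_max hst (le_refl 0))
  have hg₁bdd : BddAbove (Set.range g₁) := by
    refine ⟨1, ?_⟩
    rintro _ ⟨t, rfl⟩
    exact (mem_sq (hGmem _ (le_max_right t 0))).2.1
  have hg₂bdd : BddAbove (Set.range g₂) := by
    refine ⟨1, ?_⟩
    rintro _ ⟨t, rfl⟩
    exact (mem_sq (hGmem _ (le_max_right t 0))).2.2.2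
  set L₁ : ℝ := ⨆ t, g₁ t with hL₁def
  set L₂ : ℝ := ⨆ t, g₂ t with hL₂def
  have hg₁tend : Filter.Tendsto g₁ Filter.atTop (nhds L₁) :=
    tendsto_atTop_ciSup hg₁mono hg₁bdd
  have hg₂tend : Filter.Tendsto g₂ Filter.atTop (nhds L₂) :=
    tendsto_atTop_ciSup hg₂mono hg₂bdd
  have hGt₁ : Filter.Tendsto (fun t => (G t).1) Filter.atTop (nhds L₁) := by
    apply hg₁tend.congr'
    filter_upwards [Filter.eventually_ge_atTop (0:ℝ)] with t ht
    simp [hg₁def, max_eq_left ht]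
  have hGt₂ : Filter.Tendsto (fun t => (G t).2) Filter.atTop (nhds L₂) := by
    apply hg₂tend.congr'
    filter_upwards [Filter.eventually_ge_atTop (0:ℝ)] with t ht
    simp [hg₂def, max_eq_left ht]
  have hGL : Filter.Tendsto G Filter.atTop (nhds (L₁, L₂)) := by
    have := hGt₁.prodMk_nhds hGt₂
    simpa using this
  have hLmem : ((L₁, L₂) : ℝ × ℝ) ∈ Set.Icc ((0:ℝ), (0:ℝ)) (1, 1) := by
    rw [Set.mem_Icc, Prod.le_def, Prod.le_def]
    have hb₁' : L₁ ≤ 1 := ciSup_le (fun t => (mem_sq (hGmem _ (le_max_right t 0))).2.1)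
    have hb₂' : L₂ ≤ 1 := ciSup_le (fun t => (mem_sq (hGmem _ (le_max_right t 0))).2.2.2)
    have ha₁ : (0:ℝ) ≤ L₁ := by
      refine le_trans ?_ (le_ciSup hg₁bdd 0)
      simpa [hg₁def] using (mem_sq (hGmem 0 Set.self_mem_Ici)).1
    have ha₂ : (0:ℝ) ≤ L₂ := by
      refine le_trans ?_ (le_ciSup hg₂bdd 0)
      simpa [hg₂def] using (mem_sq (hGmem 0 Set.self_mem_Ici)).2.2.1
    exact ⟨⟨ha₁, ha₂⟩, hb₁', hb₂'⟩
  have hGsqtend : Filter.Tendsto G Filter.atTop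
      (nhdsWithin ((L₁, L₂) : ℝ × ℝ) (Set.Icc ((0:ℝ), (0:ℝ)) (1, 1))) := by
    rw [tendsto_nhdsWithin_iff]
    refine ⟨hGL, ?_⟩
    filter_upwards [Filter.eventually_ge_atTop (0:ℝ)] with t ht
    exact hGmem t ht
  have hu₁L : Filter.Tendsto u₁ Filter.atTop (nhds (Fgen c₁ (L₁, L₂))) := by
    have hcw := (Fgen_contOn hSc₁) _ hLmem
    exact hcw.tendsto.comp hGsqtend
  have hu₂L : Filter.Tendsto u₂ Filter.atTop (nhds (Fgen c₂ (L₁, L₂))) := by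
    have hcw := (Fgen_contOn hSc₂) _ hLmem
    exact hcw.tendsto.comp hGsqtend
  have hF₁nonneg : 0 ≤ Fgen c₁ (L₁, L₂) := by
    apply ge_of_tendsto hu₁L
    filter_upwards [Filter.eventually_ge_atTop (0:ℝ)] with t ht
    exact hu₁nn t ht
  have hF₂nonneg : 0 ≤ Fgen c₂ (L₁, L₂) := by
    apply ge_of_tendsto hu₂L
    filter_upwards [Filter.eventually_ge_atTop (0:ℝ)] with t ht
    exact hu₂nn t ht
  have hF₁le : Fgen c₁ (L₁, L₂) ≤ 0 := by
    by_contra hcon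
    push_neg at hcon
    set ε : ℝ := Fgen c₁ (L₁, L₂) with hεdef
    have hεpos : 0 < ε := hcon
    have hev : ∀ᶠ t in Filter.atTop, ε / 2 ≤ u₁ t :=
      hu₁L.eventually (eventually_ge_nhds (by linarith))
    obtain ⟨T, hT⟩ := Filter.eventually_atTop.mp hev
    set T' : ℝ := max T 0 with hT'def
    set t₀ : ℝ := T' + 4 / ε with ht₀def
    have hT'0 : (0:ℝ) ≤ T' := le_max_right _ _
    have hTt₀ : T' ≤ t₀ := by
      rw [ht₀def]
      have : 0 < 4 / ε := by positivity
      linarith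
    have hconst : ∫ r in T'..t₀, (ε / 2 : ℝ) ≤ ∫ r in T'..t₀, u₁ r := by
      apply intervalIntegral.integral_mono_on hTt₀ intervalIntegrable_const
      · exact (hu₁c.mono (fun r hr => hT'0.trans hr.1)).intervalIntegrable_of_Icc hTt₀
      · intro r hr
        exact hT r (le_trans (le_max_left T 0) hr.1)
    have hcval : ∫ r in T'..t₀, (ε / 2 : ℝ) = (2 : ℝ) := by
      rw [intervalIntegral.integral_const, smul_eq_mul]
      rw [ht₀def]
      field_simp
      ring
    have hFT := hFTC₁ T' t₀ hT'0 hTt₀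
    have hup : (G t₀).1 ≤ 1 := (mem_sq (hGmem t₀ (hT'0.trans hTt₀))).2.1
    have hlow : 0 ≤ (G T').1 := (mem_sq (hGmem T' hT'0)).1
    rw [hcval] at hconst
    linarith
  have hF₂le : Fgen c₂ (L₁, L₂) ≤ 0 := by
    by_contra hcon
    push_neg at hcon
    set ε : ℝ := Fgen c₂ (L₁, L₂) with hεdef
    have hεpos : 0 < ε := hcon
    have hev : ∀ᶠ t in Filter.atTop, ε / 2 ≤ u₂ t :=
      hu₂L.eventually (eventually_ge_nhds (by linarith))
    obtain ⟨T, hT⟩ := Filter.eventually_atTop.mp hev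
    set T' : ℝ := max T 0 with hT'def
    set t₀ : ℝ := T' + 4 / ε with ht₀def
    have hT'0 : (0:ℝ) ≤ T' := le_max_right _ _
    have hTt₀ : T' ≤ t₀ := by
      rw [ht₀def]
      have : 0 < 4 / ε := by positivity
      linarith
    have hconst : ∫ r in T'..t₀, (ε / 2 : ℝ) ≤ ∫ r in T'..t₀, u₂ r := by
      apply intervalIntegral.integral_mono_on hTt₀ intervalIntegrable_const
      · exact (hu₂c.mono (fun r hr => hT'0.trans hr.1)).intervalIntegrable_of_Icc hTt₀
      · intro r hr
        exact hT r (le_trans (le_max_left T 0) hr.1)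
    have hcval : ∫ r in T'..t₀, (ε / 2 : ℝ) = (2 : ℝ) := by
      rw [intervalIntegral.integral_const, smul_eq_mul]
      rw [ht₀def]
      field_simp
      ring
    have hFT := hFTC₂ T' t₀ hT'0 hTt₀
    have hup : (G t₀).2 ≤ 1 := (mem_sq (hGmem t₀ (hT'0.trans hTt₀))).2.2.2
    have hlow : 0 ≤ (G T').2 := (mem_sq (hGmem T' hT'0)).2.2.1
    rw [hcval] at hconst
    linarith
  have hLq : ((L₁, L₂) : ℝ × ℝ) = q := by
    apply hquniq _ hLmem
    · rw [hid₁ _ hLmem]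
      exact le_antisymm hF₁le hF₁nonneg
    · rw [hid₂ _ hLmem]
      exact le_antisymm hF₂le hF₂nonneg
  refine ⟨?_, hMon₁, hMon₂, ?_⟩
  · intro t ht
    constructor
    · rw [hueq₁ t ht]
      exact hu₁nn t ht
    · rw [hueq₂ t ht]
      exact hu₂nn t ht
  · rw [← hLq]
    exact hGL
end
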